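/- arXiv:2401.04073 — 3 statements merged into one kernel-verified Lean document; each statement's English description precedes it below -/
import Mathlib

section
/- Let d be a positive integer and let ℓ = Ω(d). For each real x ≥ 1, the number of positive integers n ≤ x with d ∣ φ(n) is at most (x/d)·(8ℓ·log²(ex))^ℓ. -/
/-- `Ω(n)`: the number of prime factors of `n` counted with multiplicity. -/
def Omega (n : ℕ) : ℕ := n.primeFactorsList.length

lemma Omega_mul {m n : ℕ} (hm : m ≠ 0) (hn : n ≠ 0) :
    Omega (m * n) = Omega m + Omega n := by
  unfold Omega
  rw [← List.length_append]
  exact (Nat.perm_primeFactorsList_mul hm hn).length_eq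

lemma Omega_pos {e : ℕ} (he : 2 ≤ e) : 1 ≤ Omega e := by
  unfold Omega
  rcases Nat.eq_zero_or_pos e.primeFactorsList.length with h | h
  · exfalso
    rw [List.length_eq_zero_iff] at h
    rcases (Nat.primeFactorsList_eq_nil e).1 h with rfl | rfl <;> omega
  · exact h

lemma Omega_one : Omega 1 = 0 := by simp [Omega]

lemma Omega_eq_zero {d : ℕ} (hd : d ≠ 0) (h : Omega d = 0) : d = 1 := by
  unfold Omega at h
  rw [List.length_eq_zero_iff] at h
  rcases (Nat.primeFactorsList_eq_nil d).1 h with rfl | rfl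
  · omega
  · rfl

lemma Omega_prime {p : ℕ} (hp : p.Prime) : Omega p = 1 := by
  simp [Omega, Nat.primeFactorsList_prime hp]

lemma two_pow_list_le (l : List ℕ) (h : ∀ p ∈ l, 2 ≤ p) : 2 ^ l.length ≤ l.prod := by
  induction l with
  | nil => simp
  | cons a t ih =>
    simp only [List.length_cons, List.prod_cons, pow_succ]
    have h1 : 2 ^ t.length ≤ t.prod := ih fun p hp => h p (List.mem_cons_of_mem _ hp)
    have h2 : 2 ≤ a := h a List.mem_cons_self
    calc 2 ^ t.length * 2 ≤ t.prod * a := Nat.mul_le_mul h1 h2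
    _ = a * t.prod := Nat.mul_comm _ _

lemma two_pow_Omega_le {d : ℕ} (hd : d ≠ 0) : 2 ^ Omega d ≤ d := by
  have := two_pow_list_le d.primeFactorsList
    (fun p hp => (Nat.prime_of_mem_primeFactorsList hp).two_le)
  rwa [Nat.prod_primeFactorsList hd] at this

lemma omega_le_Omega (d : ℕ) : d.primeFactors.card ≤ Omega d :=
  List.toFinset_card_le _

lemma Omega_dvd_le {e d : ℕ} (hd : d ≠ 0) (h : e ∣ d) : Omega e ≤ Omega d := by
  obtain ⟨c, rfl⟩ := h
  have he : e ≠ 0 := by rintro rfl; simp at hd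
  have hc : c ≠ 0 := by rintro rfl; simp at hd
  rw [Omega_mul he hc]; omega

lemma extract_from_prod {ι : Type*} [DecidableEq ι] (s : Finset ι) (c : ι → ℕ) :
    ∀ d : ℕ, 1 < d → d ∣ ∏ i ∈ s, c i →
      ∃ i ∈ s, ∃ e, 1 < e ∧ e ∣ d ∧ e ∣ c i ∧ (d / e) ∣ ∏ j ∈ s.erase i, c j := by
  classical
  induction s using Finset.induction_on with
  | empty => intro d hd hdvd; simp at hdvd; omega
  | insert _ _ hnot ih =>
    rename_i a s
    intro d hd hdvd
    rw [Finset.prod_insert hnot] at hdvd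
    obtain ⟨e₁, e₂, he₁, he₂, heq⟩ := exists_dvd_and_dvd_of_dvd_mul hdvd
    have he₁0 : e₁ ≠ 0 := by rintro rfl; rw [heq] at hd; simp at hd
    rcases Nat.lt_or_ge 1 e₁ with h1 | h1
    · refine ⟨a, Finset.mem_insert_self _ _, e₁, h1, ⟨e₂, heq⟩, he₁, ?_⟩
      have hde : d / e₁ = e₂ := by rw [heq]; exact Nat.mul_div_cancel_left _ (by omega)
      rw [hde, Finset.erase_insert hnot]
      exact he₂
    · have he1 : e₁ = 1 := by omega
      rw [he1, one_mul] at heq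
      rw [heq] at hd ⊢
      obtain ⟨i, his, e, he, hed, heci, hrest⟩ := ih e₂ hd he₂
      refine ⟨i, Finset.mem_insert_of_mem his, e, he, hed, heci, ?_⟩
      have hia : i ≠ a := by rintro rfl; exact hnot his
      rw [Finset.erase_insert_of_ne hia.symm, Finset.prod_insert
        (fun hmem => hnot (Finset.mem_of_mem_erase hmem))]
      exact hrest.mul_left (c a)

lemma structure_lemma {d n : ℕ} (hd : 1 < d) (hn : 0 < n) (h : d ∣ Nat.totient n) :
    ∃ e q, 1 < e ∧ e ∣ d ∧ IsPrimePow q ∧ e ∣ Nat.totient q ∧ q ∣ n ∧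
      (d / e) ∣ Nat.totient (n / q) := by
  classical
  have hn0 : n ≠ 0 := hn.ne'
  have hfact : Nat.totient n =
      ∏ p ∈ n.primeFactors, Nat.totient (p ^ n.factorization p) := by
    rw [Nat.multiplicative_factorization Nat.totient
      (fun x y hxy => Nat.totient_mul hxy) Nat.totient_one hn0]
    rw [Finsupp.prod, Nat.support_factorization]
  rw [hfact] at h
  obtain ⟨p, hp, e, he, hed, heq, hrest⟩ := extract_from_prod _ _ d hd h
  have hpp : p.Prime := Nat.prime_of_mem_primeFactors hp
  have hk : 0 < n.factorization p := hpp.factorization_pos_of_dvd hn0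
    (Nat.dvd_of_mem_primeFactors hp)
  refine ⟨e, p ^ n.factorization p, he, hed, hpp.prime.isPrimePow.pow hk.ne', heq,
    Nat.ordProj_dvd n p, ?_⟩
  have hcop : Nat.Coprime (p ^ n.factorization p) (n / p ^ n.factorization p) :=
    (Nat.coprime_ordCompl hpp hn0).pow_left _
  have htot : Nat.totient n =
      Nat.totient (p ^ n.factorization p) * Nat.totient (n / p ^ n.factorization p) := by
    rw [← Nat.totient_mul hcop, Nat.ordProj_mul_ordCompl_eq_self]
  have htot2 : Nat.totient n =
      Nat.totient (p ^ n.factorization p) * ∏ q ∈ n.primeFactors.erase p,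
        Nat.totient (q ^ n.factorization q) := by
    rw [hfact, ← Finset.mul_prod_erase _ _ hp]
  have hpos : 0 < Nat.totient (p ^ n.factorization p) := Nat.totient_pos.2 (pow_pos hpp.pos _)
  have key : ∏ q ∈ n.primeFactors.erase p, Nat.totient (q ^ n.factorization q)
      = Nat.totient (n / p ^ n.factorization p) :=
    Nat.eq_of_mul_eq_mul_left hpos (htot2 ▸ htot)
  rw [← key]
  exact hrest

def Ncard (d X : ℕ) : ℕ := ((Finset.Icc 1 X).filter (fun n => d ∣ Nat.totient n)).card

def Qpp (e X : ℕ) : Finset ℕ :=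
  (Finset.Icc 2 X).filter (fun q => IsPrimePow q ∧ e ∣ Nat.totient q)

def Dv (d : ℕ) : Finset ℕ := d.divisors.filter (fun e => 1 < e)

lemma count_step {d X : ℕ} (hd : 1 < d) :
    Ncard d X ≤ ∑ e ∈ Dv d, ∑ q ∈ Qpp e X, Ncard (d / e) (X / q) := by
  classical
  have hsub : (Finset.Icc 1 X).filter (fun n => d ∣ Nat.totient n) ⊆
      (Dv d).biUnion (fun e => (Qpp e X).biUnion (fun q =>
        ((Finset.Icc 1 (X / q)).filter (fun m => (d / e) ∣ Nat.totient m)).image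
          (fun m => q * m))) := by
    intro n hn
    rw [Finset.mem_filter, Finset.mem_Icc] at hn
    obtain ⟨⟨hn1, hnX⟩, hdvd⟩ := hn
    obtain ⟨e, q, he, hed, hq, heq, hqn, hde⟩ := structure_lemma hd (by omega) hdvd
    rw [Finset.mem_biUnion]
    refine ⟨e, ?_, ?_⟩
    · rw [Dv, Finset.mem_filter, Nat.mem_divisors]
      exact ⟨⟨hed, by omega⟩, he⟩
    rw [Finset.mem_biUnion]
    have hq2 : 2 ≤ q := hq.two_le
    have hqX : q ≤ X := le_trans (Nat.le_of_dvd (by omega) hqn) hnX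
    refine ⟨q, ?_, ?_⟩
    · rw [Qpp, Finset.mem_filter, Finset.mem_Icc]
      exact ⟨⟨hq2, hqX⟩, hq, heq⟩
    rw [Finset.mem_image]
    refine ⟨n / q, ?_, Nat.mul_div_cancel' hqn⟩
    rw [Finset.mem_filter, Finset.mem_Icc]
    refine ⟨⟨?_, Nat.div_le_div_right hnX⟩, hde⟩
    exact Nat.div_pos (Nat.le_of_dvd (by omega) hqn) (by omega)
  calc Ncard d X ≤ _ := Finset.card_le_card hsub
  _ ≤ ∑ e ∈ Dv d, ((Qpp e X).biUnion _).card := Finset.card_biUnion_le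
  _ ≤ ∑ e ∈ Dv d, ∑ q ∈ Qpp e X, Ncard (d / e) (X / q) := by
    refine Finset.sum_le_sum fun e _ => ?_
    calc _ ≤ ∑ q ∈ Qpp e X, (((Finset.Icc 1 (X / q)).filter
          (fun m => (d / e) ∣ Nat.totient m)).image (fun m => q * m)).card :=
        Finset.card_biUnion_le
    _ ≤ _ := Finset.sum_le_sum fun q _ => Finset.card_image_le

lemma sum_le_sum_inj {α β : Type*} [DecidableEq β] (S : Finset α) (T : Finset β)
    (g : α → β) (f : α → ℝ) (h : β → ℝ) (hg : Set.InjOn g S) (hmem : ∀ a ∈ S, g a ∈ T)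
    (hfh : ∀ a ∈ S, f a ≤ h (g a)) (hh : ∀ b ∈ T, 0 ≤ h b) :
    ∑ a ∈ S, f a ≤ ∑ b ∈ T, h b := by
  classical
  calc ∑ a ∈ S, f a ≤ ∑ a ∈ S, h (g a) := Finset.sum_le_sum hfh
  _ = ∑ b ∈ S.image g, h b := (Finset.sum_image (fun x hx y hy hxy => hg hx hy hxy)).symm
  _ ≤ ∑ b ∈ T, h b := Finset.sum_le_sum_of_subset_of_nonneg
      (Finset.image_subset_iff.2 hmem) (fun b hb _ => hh b hb)

lemma geom_tail_le {p : ℕ} (hp : 2 ≤ p) (a₀ M : ℕ) :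
    ∑ a ∈ Finset.Icc a₀ M, ((p : ℝ)⁻¹) ^ a ≤ 2 * ((p : ℝ)⁻¹) ^ a₀ := by
  have hp0 : (0:ℝ) < p := by positivity
  have hr0 : (0:ℝ) ≤ (p:ℝ)⁻¹ := by positivity
  have hr2 : (p:ℝ)⁻¹ ≤ 2⁻¹ := by
    have h2 : (2:ℝ) ≤ p := by exact_mod_cast hp
    exact inv_anti₀ (by norm_num) h2
  have step1 : ∑ a ∈ Finset.Icc a₀ M, ((p : ℝ)⁻¹) ^ a ≤
      ∑ j ∈ Finset.range (M + 1), ((p : ℝ)⁻¹) ^ (a₀ + j) := by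
    apply sum_le_sum_inj _ _ (fun a => a - a₀) _ _
    · intro a ha b hb hab
      simp only [Finset.coe_Icc, Set.mem_Icc] at ha hb
      simp only at hab
      omega
    · intro a ha
      rw [Finset.mem_Icc] at ha
      rw [Finset.mem_range]
      omega
    · intro a ha
      rw [Finset.mem_Icc] at ha
      rw [Nat.add_sub_cancel' ha.1]
    · intro b _; positivity
  refine step1.trans ?_
  have : ∑ j ∈ Finset.range (M + 1), ((p : ℝ)⁻¹) ^ (a₀ + j)
      = ((p : ℝ)⁻¹) ^ a₀ * ∑ j ∈ Finset.range (M + 1), ((p : ℝ)⁻¹) ^ j := by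
    rw [Finset.mul_sum]
    exact Finset.sum_congr rfl fun j _ => pow_add _ _ _
  rw [this, mul_comm (2:ℝ) _]
  apply mul_le_mul_of_nonneg_left _ (by positivity)
  have hlt : (p:ℝ)⁻¹ < 1 := lt_of_le_of_lt hr2 (by norm_num)
  have := geom_sum_eq (ne_of_lt hlt) (M + 1)
  rw [this]
  have key : (((p:ℝ)⁻¹) ^ (M+1) - 1)/((p:ℝ)⁻¹ - 1) = (1 - ((p:ℝ)⁻¹) ^ (M+1))/(1 - (p:ℝ)⁻¹) := by
    rw [← neg_div_neg_eq]; ring_nf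
  rw [key, div_le_iff₀ (by linarith)]
  have h1 : ((p:ℝ)⁻¹) ^ (M+1) ≥ 0 := by positivity
  nlinarith

lemma harmonic_bound (M : ℕ) : ∑ k ∈ Finset.Icc 1 M, ((k:ℝ))⁻¹ ≤ 1 + Real.log M := by
  have := harmonic_le_one_add_log M
  rw [harmonic_eq_sum_Icc] at this
  rw [Rat.cast_sum] at this
  simpa using this

lemma log_e_mul (x₀ : ℝ) (hx₀ : 1 ≤ x₀) :
    Real.log (Real.exp 1 * x₀) = 1 + Real.log x₀ := by
  rw [Real.log_mul (Real.exp_ne_zero 1) (by linarith), Real.log_exp]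

lemma one_le_log_e_mul (x₀ : ℝ) (hx₀ : 1 ≤ x₀) : 1 ≤ Real.log (Real.exp 1 * x₀) := by
  rw [log_e_mul x₀ hx₀]
  have := Real.log_nonneg hx₀
  linarith

/-- Sum of reciprocals of primes `p ≤ X` with `e ∣ p - 1`. -/

lemma prime_sum_bound (e X : ℕ) (he : 1 ≤ e) (x₀ : ℝ) (hx₀ : 1 ≤ x₀) (hX : (X:ℝ) ≤ x₀) :
    ∑ p ∈ (Finset.Icc 2 X).filter (fun p => p.Prime ∧ e ∣ (p - 1)), ((p:ℝ))⁻¹ ≤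
      Real.log (Real.exp 1 * x₀) / e := by
  classical
  set M := X / e with hM
  have step1 : ∑ p ∈ (Finset.Icc 2 X).filter (fun p => p.Prime ∧ e ∣ (p - 1)), ((p:ℝ))⁻¹ ≤
      ∑ k ∈ Finset.Icc 1 M, ((k:ℝ) * e)⁻¹ := by
    apply sum_le_sum_inj _ _ (fun p => (p - 1) / e) _ _
    · intro a ha b hb hab
      simp only [Finset.coe_filter, Set.mem_setOf_eq, Finset.mem_Icc] at ha hb
      simp only at hab
      obtain ⟨⟨ha2, _⟩, _, hae⟩ := ha
      obtain ⟨⟨hb2, _⟩, _, hbe⟩ := hb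
      have h1 : (a - 1) / e * e = a - 1 := Nat.div_mul_cancel hae
      have h2 : (b - 1) / e * e = b - 1 := Nat.div_mul_cancel hbe
      rw [hab] at h1
      omega
    · intro p hp
      simp only [Finset.mem_filter, Finset.mem_Icc] at hp
      obtain ⟨⟨hp2, hpX⟩, _, hpe⟩ := hp
      rw [Finset.mem_Icc]
      constructor
      · have : e ≤ p - 1 := Nat.le_of_dvd (by omega) hpe
        exact Nat.one_le_div_iff (by omega) |>.2 this
      · exact Nat.div_le_div_right (by omega)
    · intro p hp
      simp only [Finset.mem_filter, Finset.mem_Icc] at hp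
      obtain ⟨⟨hp2, hpX⟩, _, hpe⟩ := hp
      have hmul : ((p - 1) / e : ℕ) * e = p - 1 := Nat.div_mul_cancel hpe
      have hcast : (((p - 1) / e : ℕ) : ℝ) * e = ((p:ℝ) - 1) := by
        have := congrArg (fun t : ℕ => (t : ℝ)) hmul
        simp only [Nat.cast_mul] at this
        rw [this, Nat.cast_sub (by omega : 1 ≤ p), Nat.cast_one]
      rw [hcast]
      apply inv_anti₀
      · have : (2:ℝ) ≤ p := by exact_mod_cast hp2
        linarith
      · linarith
    · intro k hk
      simp only [Finset.mem_Icc] at hk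
      have : (1:ℝ) ≤ (k:ℝ) := by exact_mod_cast hk.1
      have he' : (1:ℝ) ≤ (e:ℝ) := by exact_mod_cast he
      positivity
  refine step1.trans ?_
  have step2 : ∑ k ∈ Finset.Icc 1 M, ((k:ℝ) * e)⁻¹ =
      (∑ k ∈ Finset.Icc 1 M, ((k:ℝ))⁻¹) / e := by
    rw [Finset.sum_div]
    refine Finset.sum_congr rfl fun k _ => ?_
    rw [mul_inv, div_eq_mul_inv]
  rw [step2]
  have hepos : (0:ℝ) < e := by exact_mod_cast he
  gcongr
  refine (harmonic_bound M).trans ?_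
  rw [log_e_mul x₀ hx₀]
  have hlogM : Real.log M ≤ Real.log x₀ := by
    rcases Nat.eq_zero_or_pos M with h0 | h1
    · rw [h0, Nat.cast_zero, Real.log_zero]
      exact Real.log_nonneg hx₀
    · apply Real.log_le_log (by exact_mod_cast h1)
      calc (M:ℝ) ≤ (X:ℝ) := by exact_mod_cast Nat.div_le_self X e
      _ ≤ x₀ := hX
  linarith

/-- basic facts about a prime power -/

lemma primepow_facts {q : ℕ} (hq : IsPrimePow q) :
    q.minFac.Prime ∧ 1 ≤ q.factorization q.minFac ∧
      q = q.minFac ^ q.factorization q.minFac := by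
  obtain ⟨p, k, hp, hk, rfl⟩ := hq
  rw [← Nat.prime_iff] at hp
  have hmf : (p ^ k).minFac = p := by
    have h1 : (p ^ k).minFac ∣ p ^ k := Nat.minFac_dvd _
    have hne : p ^ k ≠ 1 := by
      intro h
      exact (Nat.one_lt_pow hk.ne' hp.one_lt).ne' h
    have h2 : (p ^ k).minFac.Prime := Nat.minFac_prime hne
    have h3 : (p ^ k).minFac ∣ p := h2.dvd_of_dvd_pow h1
    exact (Nat.prime_dvd_prime_iff_eq h2 hp).1 h3
  rw [hmf, hp.factorization_pow, Finsupp.single_eq_same]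
  exact ⟨hp, hk, rfl⟩

lemma Qpp_mem {e X q : ℕ} (hq : q ∈ Qpp e X) :
    2 ≤ q ∧ q ≤ X ∧ IsPrimePow q ∧ e ∣ Nat.totient q := by
  rw [Qpp, Finset.mem_filter, Finset.mem_Icc] at hq
  exact ⟨hq.1.1, hq.1.2, hq.2.1, hq.2.2⟩

lemma Qpp_sum_bound {e X : ℕ} (he : 1 < e) (L : ℕ) (heL : Omega e ≤ L)
    (x₀ : ℝ) (hx₀ : 1 ≤ x₀) (hX : (X:ℝ) ≤ x₀) :
    ∑ q ∈ Qpp e X, ((q:ℝ))⁻¹ ≤ (2 * Real.log (Real.exp 1 * x₀) + 2 * L) / e := by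
  classical
  have hepos : (0:ℝ) < e := by positivity
  rw [← Finset.sum_filter_add_sum_filter_not (Qpp e X) (fun q => q.minFac ∣ e)]
  have hBranchB : ∑ q ∈ (Qpp e X).filter (fun q => q.minFac ∣ e), ((q:ℝ))⁻¹ ≤
      (2 * L) / e := by
    rw [← Finset.sum_fiberwise_of_maps_to (g := Nat.minFac)
      (t := e.primeFactors) ?_ (fun q => ((q:ℝ))⁻¹)]
    · have hfiber : ∀ p ∈ e.primeFactors,
          (∑ q ∈ ((Qpp e X).filter (fun q => q.minFac ∣ e)).filter
            (fun q => q.minFac = p), ((q:ℝ))⁻¹) ≤ 2 / e := by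
        intro p hp
        have hpp : p.Prime := Nat.prime_of_mem_primeFactors hp
        have hp2 : 2 ≤ p := hpp.two_le
        set a₀ := Nat.log p e + 1 with ha₀
        have step : ∑ q ∈ ((Qpp e X).filter (fun q => q.minFac ∣ e)).filter
              (fun q => q.minFac = p), ((q:ℝ))⁻¹ ≤
            ∑ a ∈ Finset.Icc a₀ X, ((p:ℝ)⁻¹) ^ a := by
          apply sum_le_sum_inj _ _ (fun q => q.factorization p) _ _
          · intro q₁ hq₁ q₂ hq₂ hh
            simp only [Finset.mem_coe, Finset.mem_filter] at hq₁ hq₂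
            obtain ⟨⟨hq₁Q, _⟩, hq₁p⟩ := hq₁
            obtain ⟨⟨hq₂Q, _⟩, hq₂p⟩ := hq₂
            obtain ⟨_, _, he₁⟩ := primepow_facts (Qpp_mem hq₁Q).2.2.1
            obtain ⟨_, _, he₂⟩ := primepow_facts (Qpp_mem hq₂Q).2.2.1
            simp only at hh
            rw [hq₁p] at he₁; rw [hq₂p] at he₂
            rw [he₁, he₂, hh]
          · intro q hq
            simp only [Finset.mem_filter] at hq
            obtain ⟨⟨hqQ, _⟩, hqp⟩ := hq
            obtain ⟨hq2, hqX, hqpp, hqe⟩ := Qpp_mem hqQ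
            obtain ⟨hmfp, hk1, heq⟩ := primepow_facts hqpp
            rw [hqp] at heq hk1
            rw [Finset.mem_Icc]
            constructor
            · -- a ≥ log p e + 1  since  e < q = p ^ a
              by_contra hcon
              push_neg at hcon
              have hale : q.factorization p ≤ Nat.log p e := by omega
              have : q ≤ e := by
                calc q = p ^ q.factorization p := heq
                _ ≤ p ^ Nat.log p e := Nat.pow_le_pow_right (by omega) hale
                _ ≤ e := Nat.pow_log_le_self p (by omega)
              have helt : e < q := by
                calc e ≤ Nat.totient q := Nat.le_of_dvd (Nat.totient_pos.2 (by omega)) hqe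
                _ < q := Nat.totient_lt q (by omega)
              omega
            · -- a ≤ X
              have h1 : q.factorization p < 2 ^ q.factorization p := Nat.lt_two_pow_self
              have h2 : 2 ^ q.factorization p ≤ p ^ q.factorization p :=
                Nat.pow_le_pow_left hp2 _
              omega
          · intro q hq
            simp only [Finset.mem_filter] at hq
            obtain ⟨⟨hqQ, _⟩, hqp⟩ := hq
            obtain ⟨hq2, hqX, hqpp, hqe⟩ := Qpp_mem hqQ
            obtain ⟨hmfp, hk1, heq⟩ := primepow_facts hqpp
            rw [hqp] at heq
            have hcast : (q:ℝ) = (p:ℝ) ^ q.factorization p := by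
              rw [heq]; push_cast; rw [← heq]
            rw [inv_pow, ← hcast]
          · intro a _; positivity
        refine step.trans ?_
        refine (geom_tail_le hp2 a₀ X).trans ?_
        have hpa : (e:ℝ) + 1 ≤ (p:ℝ) ^ a₀ := by
          have := Nat.lt_pow_succ_log_self (by omega : 1 < p) e
          have : e + 1 ≤ p ^ (Nat.log p e + 1) := this
          exact_mod_cast this
        have hppos : (0:ℝ) < (p:ℝ) ^ a₀ := by positivity
        rw [inv_pow]
        have : ((p:ℝ) ^ a₀)⁻¹ ≤ ((e:ℝ))⁻¹ := by
          apply inv_anti₀ hepos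
          linarith
        calc 2 * ((p:ℝ) ^ a₀)⁻¹ ≤ 2 * ((e:ℝ))⁻¹ := by linarith
        _ = 2 / e := by rw [div_eq_mul_inv]
      calc _ ≤ ∑ p ∈ e.primeFactors, (2 / e : ℝ) := Finset.sum_le_sum hfiber
      _ = e.primeFactors.card * (2 / e) := by rw [Finset.sum_const, nsmul_eq_mul]
      _ ≤ L * (2 / e) := by
        apply mul_le_mul_of_nonneg_right _ (by positivity)
        exact_mod_cast (omega_le_Omega e).trans heL
      _ = 2 * L / e := by ring
    · intro q hq
      simp only [Finset.mem_filter] at hq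
      obtain ⟨hqQ, hqdvd⟩ := hq
      obtain ⟨hq2, hqX, hqpp, hqe⟩ := Qpp_mem hqQ
      obtain ⟨hmfp, _, _⟩ := primepow_facts hqpp
      exact Nat.mem_primeFactors.2 ⟨hmfp, hqdvd, by omega⟩
  have hBranchA : ∑ q ∈ (Qpp e X).filter (fun q => ¬ q.minFac ∣ e), ((q:ℝ))⁻¹ ≤
      2 * Real.log (Real.exp 1 * x₀) / e := by
    set P := (Finset.Icc 2 X).filter (fun p => p.Prime ∧ e ∣ (p - 1)) with hP
    rw [← Finset.sum_fiberwise_of_maps_to (g := Nat.minFac) (t := P) ?_ (fun q => ((q:ℝ))⁻¹)]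
    · have hfiber : ∀ p ∈ P,
          (∑ q ∈ ((Qpp e X).filter (fun q => ¬ q.minFac ∣ e)).filter
            (fun q => q.minFac = p), ((q:ℝ))⁻¹) ≤ 2 * ((p:ℝ))⁻¹ := by
        intro p hp
        rw [hP, Finset.mem_filter, Finset.mem_Icc] at hp
        obtain ⟨⟨hp2, hpX⟩, hpp, hpe⟩ := hp
        have step : ∑ q ∈ ((Qpp e X).filter (fun q => ¬ q.minFac ∣ e)).filter
              (fun q => q.minFac = p), ((q:ℝ))⁻¹ ≤
            ∑ a ∈ Finset.Icc 1 X, ((p:ℝ)⁻¹) ^ a := by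
          apply sum_le_sum_inj _ _ (fun q => q.factorization p) _ _
          · intro q₁ hq₁ q₂ hq₂ hh
            simp only [Finset.mem_coe, Finset.mem_filter] at hq₁ hq₂
            obtain ⟨⟨hq₁Q, _⟩, hq₁p⟩ := hq₁
            obtain ⟨⟨hq₂Q, _⟩, hq₂p⟩ := hq₂
            obtain ⟨_, _, he₁⟩ := primepow_facts (Qpp_mem hq₁Q).2.2.1
            obtain ⟨_, _, he₂⟩ := primepow_facts (Qpp_mem hq₂Q).2.2.1
            simp only at hh
            rw [hq₁p] at he₁; rw [hq₂p] at he₂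
            rw [he₁, he₂, hh]
          · intro q hq
            simp only [Finset.mem_filter] at hq
            obtain ⟨⟨hqQ, _⟩, hqp⟩ := hq
            obtain ⟨hq2, hqX, hqpp, hqe⟩ := Qpp_mem hqQ
            obtain ⟨hmfp, hk1, heq⟩ := primepow_facts hqpp
            rw [hqp] at heq hk1
            rw [Finset.mem_Icc]
            refine ⟨hk1, ?_⟩
            have h1 : q.factorization p < 2 ^ q.factorization p := Nat.lt_two_pow_self
            have h2 : 2 ^ q.factorization p ≤ p ^ q.factorization p :=
              Nat.pow_le_pow_left hp2 _
            omega
          · intro q hq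
            simp only [Finset.mem_filter] at hq
            obtain ⟨⟨hqQ, _⟩, hqp⟩ := hq
            obtain ⟨hq2, hqX, hqpp, hqe⟩ := Qpp_mem hqQ
            obtain ⟨hmfp, hk1, heq⟩ := primepow_facts hqpp
            rw [hqp] at heq
            have hcast : (q:ℝ) = (p:ℝ) ^ q.factorization p := by
              rw [heq]; push_cast; rw [← heq]
            rw [inv_pow, ← hcast]
          · intro a _; positivity
        refine step.trans ?_
        have := geom_tail_le hp2 1 X
        rwa [pow_one] at this
      calc _ ≤ ∑ p ∈ P, 2 * ((p:ℝ))⁻¹ := Finset.sum_le_sum hfiber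
      _ = 2 * ∑ p ∈ P, ((p:ℝ))⁻¹ := by rw [Finset.mul_sum]
      _ ≤ 2 * (Real.log (Real.exp 1 * x₀) / e) := by
        apply mul_le_mul_of_nonneg_left _ (by norm_num)
        exact prime_sum_bound e X (by omega) x₀ hx₀ hX
      _ = 2 * Real.log (Real.exp 1 * x₀) / e := by ring
    · intro q hq
      simp only [Finset.mem_filter] at hq
      obtain ⟨hqQ, hqnd⟩ := hq
      obtain ⟨hq2, hqX, hqpp, hqe⟩ := Qpp_mem hqQ
      obtain ⟨hmfp, hk1, heq⟩ := primepow_facts hqpp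
      rw [hP, Finset.mem_filter, Finset.mem_Icc]
      have hmin2 : 2 ≤ q.minFac := hmfp.two_le
      have hminX : q.minFac ≤ X := le_trans (Nat.minFac_le (by omega)) hqX
      refine ⟨⟨hmin2, hminX⟩, hmfp, ?_⟩
      -- e ∣ p - 1
      have htot : Nat.totient q =
          q.minFac ^ (q.factorization q.minFac - 1) * (q.minFac - 1) := by
        conv_lhs => rw [heq]
        exact Nat.totient_prime_pow hmfp hk1
      have hcop : Nat.Coprime e (q.minFac ^ (q.factorization q.minFac - 1)) :=
        Nat.Coprime.pow_right _ (((Nat.Prime.coprime_iff_not_dvd hmfp).2 hqnd).symm)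
      apply hcop.dvd_of_dvd_mul_left
      rw [← htot]
      exact hqe
  have hnn : (0:ℝ) ≤ 2 * L / e := by positivity
  calc _ ≤ (2 * L) / e + 2 * Real.log (Real.exp 1 * x₀) / e := add_le_add hBranchB hBranchA
  _ = (2 * Real.log (Real.exp 1 * x₀) + 2 * L) / e := by ring

lemma cnt_le {d : ℕ} (hd : d ≠ 0) :
    ∀ j, (d.divisors.filter (fun e => Omega e = j)).card ≤ d.primeFactors.card ^ j := by
  intro j
  induction j with
  | zero =>
    rw [pow_zero]
    apply Finset.card_le_one.2
    intro a ha b hb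
    simp only [Finset.mem_filter, Nat.mem_divisors] at ha hb
    have ha1 : a = 1 := Omega_eq_zero (by rintro rfl; exact hd ((Nat.zero_dvd).1 ha.1.1)) ha.2
    have hb1 : b = 1 := Omega_eq_zero (by rintro rfl; exact hd ((Nat.zero_dvd).1 hb.1.1)) hb.2
    rw [ha1, hb1]
  | succ j ih =>
    have hinj : ∀ e ∈ d.divisors.filter (fun e => Omega e = j + 1),
        (e.minFac, e / e.minFac) ∈
          d.primeFactors ×ˢ (d.divisors.filter (fun e => Omega e = j)) := by
      intro e he
      simp only [Finset.mem_filter, Nat.mem_divisors] at he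
      obtain ⟨⟨hed, _⟩, hΩ⟩ := he
      have he0 : e ≠ 0 := by rintro rfl; exact hd ((Nat.zero_dvd).1 hed)
      have he1 : e ≠ 1 := by rintro rfl; simp [Omega] at hΩ
      have hmf : e.minFac.Prime := Nat.minFac_prime he1
      have hdvd : e.minFac ∣ e := Nat.minFac_dvd e
      rw [Finset.mem_product]
      constructor
      · exact Nat.mem_primeFactors.2 ⟨hmf, hdvd.trans hed, hd⟩
      · simp only [Finset.mem_filter, Nat.mem_divisors]
        refine ⟨⟨(Nat.div_dvd_of_dvd hdvd).trans hed, hd⟩, ?_⟩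
        have heq : e = e.minFac * (e / e.minFac) := (Nat.mul_div_cancel' hdvd).symm
        have hne : e / e.minFac ≠ 0 := by
          intro h0
          rw [h0, Nat.mul_zero] at heq
          exact he0 heq
        have := Omega_mul (Nat.Prime.ne_zero hmf) hne
        rw [← heq, Omega_prime hmf] at this
        omega
    have hinj2 : Set.InjOn (fun e : ℕ => (e.minFac, e / e.minFac))
        ↑(d.divisors.filter (fun e => Omega e = j + 1)) := by
      intro a ha b hb hab
      simp only [Prod.mk.injEq] at hab
      have h1 : a = a.minFac * (a / a.minFac) := (Nat.mul_div_cancel' (Nat.minFac_dvd a)).symm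
      have h2 : b = b.minFac * (b / b.minFac) := (Nat.mul_div_cancel' (Nat.minFac_dvd b)).symm
      have hmid : a.minFac * (a / a.minFac) = b.minFac * (b / b.minFac) := by
        rw [hab.2, hab.1]
      exact h1.trans (hmid.trans h2.symm)
    calc (d.divisors.filter (fun e => Omega e = j + 1)).card
        ≤ (d.primeFactors ×ˢ (d.divisors.filter (fun e => Omega e = j))).card :=
          Finset.card_le_card_of_injOn _ hinj hinj2
    _ = d.primeFactors.card * (d.divisors.filter (fun e => Omega e = j)).card :=
          Finset.card_product _ _
    _ ≤ d.primeFactors.card * d.primeFactors.card ^ j :=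
          Nat.mul_le_mul_left _ ih
    _ = d.primeFactors.card ^ (j + 1) := by ring

lemma Dv_sum_le {d : ℕ} (hd : 1 < d) (L : ℕ) (hL : 1 ≤ L) (hΩL : Omega d ≤ L)
    (K : ℝ) (hK : 2 * (L:ℝ) ≤ K) :
    ∑ e ∈ Dv d, K ^ (Omega d - Omega e) ≤ 2 * L * K ^ (Omega d - 1) := by
  classical
  have hK0 : (0:ℝ) ≤ K := by
    have : (0:ℝ) ≤ 2 * (L:ℝ) := by positivity
    linarith
  set ℓ := Omega d with hℓ
  have hmaps : ∀ e ∈ Dv d, Omega e ∈ Finset.Icc 1 ℓ := by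
    intro e he
    rw [Dv, Finset.mem_filter, Nat.mem_divisors] at he
    rw [Finset.mem_Icc]
    exact ⟨Omega_pos he.2, Omega_dvd_le (by omega) he.1.1⟩
  rw [← Finset.sum_fiberwise_of_maps_to hmaps (fun e => K ^ (ℓ - Omega e))]
  have hstep : ∀ j ∈ Finset.Icc 1 ℓ,
      ∑ e ∈ (Dv d).filter (fun e => Omega e = j), K ^ (ℓ - Omega e) ≤
        (L:ℝ) * K ^ (ℓ - 1) * (2⁻¹:ℝ) ^ (j - 1) := by
    intro j hj
    rw [Finset.mem_Icc] at hj
    have hsum_eq : ∑ e ∈ (Dv d).filter (fun e => Omega e = j), K ^ (ℓ - Omega e) =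
        ((Dv d).filter (fun e => Omega e = j)).card * K ^ (ℓ - j) := by
      rw [Finset.sum_congr rfl (fun e he => ?_), Finset.sum_const, nsmul_eq_mul]
      rw [Finset.mem_filter] at he
      rw [he.2]
    rw [hsum_eq]
    have hcard : ((Dv d).filter (fun e => Omega e = j)).card ≤ L ^ j := by
      calc ((Dv d).filter (fun e => Omega e = j)).card
          ≤ (d.divisors.filter (fun e => Omega e = j)).card := by
            apply Finset.card_le_card
            rw [Dv, Finset.filter_filter]
            intro e he
            rw [Finset.mem_filter] at he ⊢
            exact ⟨he.1, he.2.2⟩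
      _ ≤ d.primeFactors.card ^ j := cnt_le (by omega) j
      _ ≤ L ^ j := Nat.pow_le_pow_left ((omega_le_Omega d).trans hΩL) j
    have hLj : ((Dv d).filter (fun e => Omega e = j)).card ≤ ((L:ℝ)) ^ j := by
      calc (((Dv d).filter (fun e => Omega e = j)).card : ℝ) ≤ ((L ^ j : ℕ) : ℝ) := by
            exact_mod_cast hcard
      _ = (L:ℝ) ^ j := by push_cast; rfl
    calc (((Dv d).filter (fun e => Omega e = j)).card : ℝ) * K ^ (ℓ - j)
        ≤ (L:ℝ) ^ j * K ^ (ℓ - j) := by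
          apply mul_le_mul_of_nonneg_right hLj (by positivity)
    _ ≤ (L:ℝ) * K ^ (ℓ - 1) * (2⁻¹:ℝ) ^ (j - 1) := by
        have hLK : (L:ℝ) ^ (j-1) ≤ (K/2) ^ (j-1) := by
          apply pow_le_pow_left₀ (by positivity)
          linarith
        have hLj' : (L:ℝ) ^ j = (L:ℝ) * (L:ℝ) ^ (j - 1) := by
          conv_lhs => rw [show j = 1 + (j - 1) by omega]
          rw [pow_add, pow_one]
        rw [hLj']
        have key : (L:ℝ) * (L:ℝ)^(j-1) * K^(ℓ-j) ≤ (L:ℝ) * (K/2)^(j-1) * K^(ℓ-j) := by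
          apply mul_le_mul_of_nonneg_right _ (by positivity)
          apply mul_le_mul_of_nonneg_left hLK (by positivity)
        refine key.trans ?_
        apply le_of_eq
        rw [div_pow, div_eq_mul_inv, ← inv_pow]
        have hpow : K ^ (j-1) * K ^ (ℓ-j) = K ^ (ℓ-1) := by
          rw [← pow_add]
          congr 1
          omega
        calc (L:ℝ) * (K^(j-1) * (2⁻¹:ℝ)^(j-1)) * K^(ℓ-j)
            = (L:ℝ) * (K^(j-1) * K^(ℓ-j)) * (2⁻¹:ℝ)^(j-1) := by ring
        _ = (L:ℝ) * K^(ℓ-1) * (2⁻¹:ℝ)^(j-1) := by rw [hpow]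
  calc ∑ j ∈ Finset.Icc 1 ℓ, ∑ e ∈ (Dv d).filter (fun e => Omega e = j), K ^ (ℓ - Omega e)
      ≤ ∑ j ∈ Finset.Icc 1 ℓ, (L:ℝ) * K ^ (ℓ - 1) * (2⁻¹:ℝ) ^ (j - 1) :=
        Finset.sum_le_sum hstep
  _ = (L:ℝ) * K ^ (ℓ - 1) * ∑ j ∈ Finset.Icc 1 ℓ, (2⁻¹:ℝ) ^ (j - 1) := by
      rw [Finset.mul_sum]
  _ ≤ (L:ℝ) * K ^ (ℓ - 1) * 2 := by
      apply mul_le_mul_of_nonneg_left _ (by positivity)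
      have step : ∑ j ∈ Finset.Icc 1 ℓ, (2⁻¹:ℝ) ^ (j - 1) ≤
          ∑ i ∈ Finset.Icc 0 ℓ, (((2:ℕ):ℝ)⁻¹) ^ i := by
        apply sum_le_sum_inj _ _ (fun j => j - 1) _ _
        · intro a ha b hb hab
          simp only [Finset.coe_Icc, Set.mem_Icc] at ha hb
          simp only at hab
          omega
        · intro a ha
          rw [Finset.mem_Icc] at ha ⊢
          omega
        · intro a _
          norm_num
        · intro b _; positivity
      refine step.trans ?_
      have := geom_tail_le (le_refl 2) 0 ℓ
      rw [pow_zero, mul_one] at this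
      exact this
  _ = 2 * L * K ^ (ℓ - 1) := by ring

lemma Ncard_one (X : ℕ) : Ncard 1 X = X := by
  rw [Ncard]
  have : (Finset.Icc 1 X).filter (fun n => 1 ∣ Nat.totient n) = Finset.Icc 1 X :=
    Finset.filter_true_of_mem (fun n _ => one_dvd _)
  rw [this, Nat.card_Icc]
  omega

lemma aux_induction (x₀ : ℝ) (hx₀ : 1 ≤ x₀) (L : ℕ) (hL : 1 ≤ L)
    (hnum : (2 * Real.log (Real.exp 1 * x₀) + 2 * L) * (2 * L) ≤
      8 * L * (Real.log (Real.exp 1 * x₀)) ^ 2) :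
    ∀ (b d X : ℕ), Omega d ≤ b → 0 < d → Omega d ≤ L → (X:ℝ) ≤ x₀ →
      (Ncard d X : ℝ) ≤ ((X:ℝ) / d) * (8 * L * (Real.log (Real.exp 1 * x₀)) ^ 2) ^ (Omega d) := by
  set Klog := Real.log (Real.exp 1 * x₀) with hKlog
  have hKlog1 : 1 ≤ Klog := one_le_log_e_mul x₀ hx₀
  set K := 8 * (L:ℝ) * Klog ^ 2 with hK
  have hL1 : (1:ℝ) ≤ L := by exact_mod_cast hL
  have hK2L : 2 * (L:ℝ) ≤ K := by nlinarith
  have hK0 : (0:ℝ) ≤ K := by nlinarith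
  intro b
  induction b with
  | zero =>
    intro d X hb hd hdL hX
    have hd1 : d = 1 := Omega_eq_zero (by omega) (by omega)
    subst hd1
    have h0 : Omega 1 = 0 := by simp [Omega]
    rw [Ncard_one, h0, pow_zero, Nat.cast_one, div_one, mul_one]
  | succ b ih =>
    intro d X hb hd hdL hX
    rcases Nat.lt_or_ge d 2 with hd2 | hd2
    · have hd1 : d = 1 := by omega
      subst hd1
      have h0 : Omega 1 = 0 := by simp [Omega]
      rw [Ncard_one, h0, pow_zero, Nat.cast_one, div_one, mul_one]
    · -- main case
      have hdne : d ≠ 0 := by omega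
      have hX0 : (0:ℝ) ≤ (X:ℝ) := by positivity
      have step1 : (Ncard d X : ℝ) ≤
          ∑ e ∈ Dv d, ∑ q ∈ Qpp e X, (Ncard (d / e) (X / q) : ℝ) := by
        have := count_step (X := X) (by omega : 1 < d)
        calc (Ncard d X : ℝ) ≤ ((∑ e ∈ Dv d, ∑ q ∈ Qpp e X, Ncard (d / e) (X / q) : ℕ) : ℝ) := by
              exact_mod_cast this
        _ = _ := by push_cast; rfl
      have step2 : ∀ e ∈ Dv d, ∑ q ∈ Qpp e X, (Ncard (d / e) (X / q) : ℝ) ≤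
          ((X:ℝ) / d) * (2 * Klog + 2 * L) * K ^ (Omega d - Omega e) := by
        intro e he
        rw [Dv, Finset.mem_filter, Nat.mem_divisors] at he
        obtain ⟨⟨hed, _⟩, he1⟩ := he
        set d' := d / e with hd'
        have hdd : d = e * d' := (Nat.mul_div_cancel' hed).symm
        have hd'0 : 0 < d' := Nat.div_pos (Nat.le_of_dvd (by omega) hed) (by omega)
        have hΩsplit : Omega d = Omega e + Omega d' := by
          rw [hdd] at hdne ⊢
          exact Omega_mul (by omega) (by omega)
        have hΩe : 1 ≤ Omega e := Omega_pos he1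
        have hΩd' : Omega d' ≤ b := by omega
        have hΩd'L : Omega d' ≤ L := by omega
        have hqsum : ∀ q ∈ Qpp e X, (Ncard d' (X / q) : ℝ) ≤
            ((X:ℝ) / q / d') * K ^ (Omega d') := by
          intro q hq
          rw [Qpp, Finset.mem_filter, Finset.mem_Icc] at hq
          have hq2 : 2 ≤ q := hq.1.1
          have hXq : ((X / q : ℕ) : ℝ) ≤ x₀ := by
            calc ((X / q : ℕ) : ℝ) ≤ (X:ℝ) := by exact_mod_cast Nat.div_le_self X q
            _ ≤ x₀ := hX
          have hIH := ih d' (X / q) hΩd' hd'0 hΩd'L hXq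
          refine hIH.trans ?_
          have hc : ((X / q : ℕ) : ℝ) ≤ (X:ℝ)/q := Nat.cast_div_le
          have hd'0' : (0:ℝ) < (d':ℝ) := by exact_mod_cast hd'0
          gcongr
        have hΩeL : Omega e ≤ L := by omega
        have hd'R : (0:ℝ) < (d':ℝ) := by exact_mod_cast hd'0
        have heR : (0:ℝ) < (e:ℝ) := by
          have : (0:ℕ) < e := by omega
          exact_mod_cast this
        calc ∑ q ∈ Qpp e X, (Ncard d' (X/q):ℝ)
            ≤ ∑ q ∈ Qpp e X, ((X:ℝ)/q/d') * K^(Omega d') := Finset.sum_le_sum hqsum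
        _ = ((X:ℝ)/d') * K^(Omega d') * ∑ q ∈ Qpp e X, ((q:ℝ))⁻¹ := by
            rw [Finset.mul_sum]
            refine Finset.sum_congr rfl fun q _ => ?_
            ring
        _ ≤ ((X:ℝ)/d') * K^(Omega d') * ((2*Klog + 2*(L:ℝ))/e) := by
            apply mul_le_mul_of_nonneg_left
              (Qpp_sum_bound he1 L hΩeL x₀ hx₀ hX) (by positivity)
        _ = ((X:ℝ) / d) * (2 * Klog + 2 * (L:ℝ)) * K ^ (Omega d - Omega e) := by
            have hΩ : Omega d - Omega e = Omega d' := by omega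
            rw [hΩ]
            have hde : (d:ℝ) = (e:ℝ) * (d':ℝ) := by exact_mod_cast congrArg Nat.cast hdd
            rw [hde]
            field_simp
      have hKlogL : (0:ℝ) ≤ 2 * Klog + 2 * (L:ℝ) := by positivity
      have hℓ : 1 ≤ Omega d := Omega_pos hd2
      calc (Ncard d X : ℝ)
          ≤ ∑ e ∈ Dv d, ∑ q ∈ Qpp e X, (Ncard (d / e) (X / q) : ℝ) := step1
      _ ≤ ∑ e ∈ Dv d, ((X:ℝ) / d) * (2 * Klog + 2 * (L:ℝ)) * K ^ (Omega d - Omega e) :=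
          Finset.sum_le_sum step2
      _ = ((X:ℝ) / d) * (2 * Klog + 2 * (L:ℝ)) * ∑ e ∈ Dv d, K ^ (Omega d - Omega e) := by
          rw [Finset.mul_sum]
      _ ≤ ((X:ℝ) / d) * (2 * Klog + 2 * (L:ℝ)) * (2 * L * K ^ (Omega d - 1)) := by
          apply mul_le_mul_of_nonneg_left
            (Dv_sum_le (by omega) L hL hdL K hK2L) (by positivity)
      _ = ((X:ℝ) / d) * (((2 * Klog + 2 * (L:ℝ)) * (2 * L)) * K ^ (Omega d - 1)) := by ring
      _ ≤ ((X:ℝ) / d) * (K * K ^ (Omega d - 1)) := by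
          apply mul_le_mul_of_nonneg_left _ (by positivity)
          apply mul_le_mul_of_nonneg_right hnum (by positivity)
      _ = ((X:ℝ) / d) * K ^ (Omega d) := by
          congr 1
          rw [← pow_succ']
          congr 1
          omega

theorem count_totient_divisible (d : ℕ) (hd : 0 < d) (x : ℝ) (hx : 1 ≤ x) :
    (((Finset.Icc 1 ⌊x⌋₊).filter (fun n => d ∣ Nat.totient n)).card : ℝ) ≤
      (x / d) * (8 * (Omega d) * Real.log (Real.exp 1 * x) ^ 2) ^ (Omega d) := by
  have hx0 : (0:ℝ) ≤ x := by linarith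
  have hfloor : ((⌊x⌋₊ : ℕ) : ℝ) ≤ x := Nat.floor_le hx0
  have hKlog1 : 1 ≤ Real.log (Real.exp 1 * x) := one_le_log_e_mul x hx
  rcases Nat.lt_or_ge d 2 with hd2 | hd2
  · -- d = 1
    have hd1 : d = 1 := by omega
    subst hd1
    have h0 : Omega 1 = 0 := by simp [Omega]
    rw [h0, pow_zero, Nat.cast_one, div_one, mul_one]
    have : (Finset.Icc 1 ⌊x⌋₊).filter (fun n => 1 ∣ Nat.totient n) = Finset.Icc 1 ⌊x⌋₊ :=
      Finset.filter_true_of_mem (fun n _ => one_dvd _)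
    rw [this, Nat.card_Icc]
    simpa using hfloor
  · set L := Omega d with hLdef
    have hL1 : 1 ≤ L := Omega_pos hd2
    have hbase0 : (0:ℝ) ≤ 8 * (L:ℝ) * Real.log (Real.exp 1 * x) ^ 2 := by positivity
    rcases Nat.lt_or_ge ⌊x⌋₊ (d + 1) with hXd | hXd
    · -- floor x ≤ d : the set is empty
      have hempty : (Finset.Icc 1 ⌊x⌋₊).filter (fun n => d ∣ Nat.totient n) = ∅ := by
        rw [Finset.filter_eq_empty_iff]
        intro n hn
        rw [Finset.mem_Icc] at hn
        intro hdvd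
        rcases Nat.lt_or_ge n 2 with hn1 | hn2
        · have hn1' : n = 1 := by omega
          subst hn1'
          rw [Nat.totient_one] at hdvd
          have : d = 1 := Nat.eq_one_of_dvd_one hdvd
          omega
        · have h1 : d ≤ Nat.totient n := Nat.le_of_dvd (Nat.totient_pos.2 (by omega)) hdvd
          have h2 : Nat.totient n < n := Nat.totient_lt n (by omega)
          omega
      rw [hempty]
      simp only [Finset.card_empty, Nat.cast_zero]
      positivity
    · -- d < floor x
      have hdx : (d:ℝ) ≤ x := by
        calc (d:ℝ) ≤ (⌊x⌋₊ : ℝ) := by exact_mod_cast (by omega : d ≤ ⌊x⌋₊)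
        _ ≤ x := hfloor
      have h2L : (2:ℝ) ^ L ≤ (d:ℝ) := by exact_mod_cast two_pow_Omega_le (by omega)
      have hlogd : (L:ℝ) * Real.log 2 ≤ Real.log x := by
        calc (L:ℝ) * Real.log 2 = Real.log ((2:ℝ) ^ L) := by rw [Real.log_pow]
        _ ≤ Real.log (d:ℝ) := Real.log_le_log (by positivity) h2L
        _ ≤ Real.log x := Real.log_le_log (by exact_mod_cast (by omega : 0 < d)) hdx
      have hlog : 1 + (L:ℝ) * Real.log 2 ≤ Real.log (Real.exp 1 * x) := by
        rw [log_e_mul x hx]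
        linarith
      have hnum : (2 * Real.log (Real.exp 1 * x) + 2 * L) * (2 * L) ≤
          8 * L * (Real.log (Real.exp 1 * x)) ^ 2 := by
        set t := Real.log (Real.exp 1 * x) with ht
        have hlog2 : (0.6931471803:ℝ) < Real.log 2 := Real.log_two_gt_d9
        have hu0 : (1:ℝ) ≤ (L:ℝ) := by exact_mod_cast hL1
        have hu : (L:ℝ) * 0.6931471803 ≤ t - 1 := by nlinarith
        nlinarith [sq_nonneg (t - 1), sq_nonneg (2*t - 1), sq_nonneg ((L:ℝ) - 1),
          mul_nonneg (sub_nonneg.2 hKlog1) (sub_nonneg.2 hu0)]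
      have haux := aux_induction x hx L hL1 hnum L d ⌊x⌋₊ le_rfl hd le_rfl hfloor
      refine haux.trans ?_
      have hpow0 : (0:ℝ) ≤ (8 * (L:ℝ) * Real.log (Real.exp 1 * x) ^ 2) ^ Omega d := by
        positivity
      apply mul_le_mul_of_nonneg_right _ hpow0
      gcongr
end

section
/- Let d be a positive integer and let ℓ = Ω(d). For each real x ≥ 1, the number of positive integers n ≤ x with d ∣ σ(n) is at most (x/d)·(8ℓ·log²(ex))^ℓ. -/
/-- The sum-of-divisors function `σ`. -/
def sigmaFn (n : ℕ) : ℕ := ∑ d ∈ n.divisors, d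

open Finset Real

lemma sigmaFn_mul {a b : ℕ} (h : Nat.Coprime a b) :
    sigmaFn (a * b) = sigmaFn a * sigmaFn b := by
  have := ArithmeticFunction.IsMultiplicative.map_mul_of_coprime
    (ArithmeticFunction.isMultiplicative_sigma (k := 1)) h
  simpa only [ArithmeticFunction.sigma_one_apply, sigmaFn] using this

lemma sigmaFn_prime_pow {p : ℕ} (hp : p.Prime) (a : ℕ) :
    sigmaFn (p ^ a) = ∑ i ∈ range (a + 1), p ^ i := by
  rw [sigmaFn, Nat.sum_divisors_prime_pow hp]

lemma sigmaFn_pos {n : ℕ} (hn : 0 < n) : 0 < sigmaFn n :=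
  Finset.sum_pos (fun d hd => Nat.pos_of_mem_divisors hd)
    ⟨1, Nat.one_mem_divisors.mpr hn.ne'⟩

lemma sigmaFn_prime_pow_le {p : ℕ} (hp : p.Prime) (a : ℕ) :
    sigmaFn (p ^ a) ≤ 2 * p ^ a := by
  rw [sigmaFn_prime_pow hp]
  induction a with
  | zero => simp
  | succ a ih =>
      rw [Finset.sum_range_succ]
      calc ∑ i ∈ range (a+1), p ^ i + p ^ (a+1) ≤ 2 * p ^ a + p ^ (a+1) := by omega
        _ ≤ 2 * p ^ (a+1) := by
            have h2 : 2 * p ^ a ≤ p * p ^ a := Nat.mul_le_mul_right _ hp.two_le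
            rw [pow_succ]; nlinarith [pow_pos hp.pos a]

lemma Omega_prime_pow {p : ℕ} (hp : p.Prime) (a : ℕ) : Omega (p ^ a) = a := by
  unfold Omega; rw [hp.primeFactorsList_pow, List.length_replicate]

lemma sigmaFn_pp_strictmono {a : ℕ} (ha : 0 < a) {p q : ℕ} (hp : p.Prime) (hq : q.Prime)
    (hpq : p < q) : sigmaFn (p ^ a) < sigmaFn (q ^ a) := by
  rw [sigmaFn_prime_pow hp, sigmaFn_prime_pow hq]
  apply Finset.sum_lt_sum (fun i _ => Nat.pow_le_pow_left hpq.le i)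
  exact ⟨1, by simp [Finset.mem_range, ha], by simpa using Nat.pow_lt_pow_left hpq one_ne_zero⟩

lemma Omega_mul_s13 {a b : ℕ} (ha : a ≠ 0) (hb : b ≠ 0) :
    Omega (a * b) = Omega a + Omega b := by
  unfold Omega
  rw [(Nat.perm_primeFactorsList_mul ha hb).length_eq, List.length_append]

lemma Omega_eq_zero_iff {d : ℕ} (hd : 0 < d) : Omega d = 0 ↔ d = 1 := by
  unfold Omega
  rw [List.length_eq_zero_iff, Nat.primeFactorsList_eq_nil]
  omega

lemma Omega_multiset_prod (T : Multiset ℕ) (hT : ∀ p ∈ T, p.Prime) :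
    Omega T.prod = Multiset.card T := by
  induction T using Multiset.induction with
  | empty => simp [Omega]
  | cons p T ih =>
      have hp : p.Prime := hT p (Multiset.mem_cons_self p T)
      have hT' : ∀ q ∈ T, q.Prime := fun q hq => hT q (Multiset.mem_cons_of_mem hq)
      have hTpos : T.prod ≠ 0 := by
        intro h
        have := Multiset.prod_pos (s := T) (fun q hq => (hT' q hq).pos)
        omega
      rw [Multiset.prod_cons, Omega_mul_s13 hp.pos.ne' hTpos, ih hT', Multiset.card_cons]
      have : Omega p = 1 := by
        have := Omega_prime_pow hp 1
        rwa [pow_one] at this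
      omega

lemma exists_primepow {n : ℕ} (hn : 0 < n) {r : ℕ} (hr : r.Prime)
    (hdvd : r ∣ sigmaFn n) :
    ∃ p, p.Prime ∧ p ∣ n ∧ r ∣ sigmaFn (p ^ n.factorization p) := by
  induction n using Nat.strong_induction_on with
  | _ n ih =>
    rcases eq_or_lt_of_le (Nat.succ_le_of_lt hn) with h1 | h2
    · exfalso
      have h1' : sigmaFn 1 = 1 := by simp [sigmaFn]
      rw [← h1, h1'] at hdvd
      exact hr.one_lt.ne' (Nat.eq_one_of_dvd_one hdvd)
    · have hn2 : 2 ≤ n := h2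
      set p := n.minFac with hp_def
      have hp : p.Prime := Nat.minFac_prime (by omega)
      set e := n.factorization p with he_def
      have hsplit : p ^ e * (n / p ^ e) = n := Nat.ordProj_mul_ordCompl_eq_self n p
      have hcop : Nat.Coprime (p ^ e) (n / p ^ e) :=
        Nat.Coprime.pow_left _ (Nat.coprime_ordCompl hp (by omega))
      have hσ : sigmaFn n = sigmaFn (p ^ e) * sigmaFn (n / p ^ e) := by
        conv_lhs => rw [← hsplit]
        exact sigmaFn_mul hcop
      rw [hσ] at hdvd
      rcases (Nat.Prime.dvd_mul hr).mp hdvd with h | h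
      · exact ⟨p, hp, n.minFac_dvd, h⟩
      · have hnc_pos : 0 < n / p ^ e := Nat.ordCompl_pos p (by omega)
        have hlt : n / p ^ e < n := by
          apply Nat.div_lt_self (by omega)
          exact Nat.one_lt_pow (Nat.Prime.factorization_pos_of_dvd hp (by omega) n.minFac_dvd).ne' hp.one_lt
        obtain ⟨q, hq, hqdvd, hqr⟩ := ih _ hlt hnc_pos h
        refine ⟨q, hq, hqdvd.trans (Nat.ordCompl_dvd n p), ?_⟩
        have : (n / p ^ e).factorization q = n.factorization q := by
          rw [Nat.factorization_ordCompl]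
          have hqp : q ≠ p := by
            rintro rfl
            exact Nat.not_dvd_ordCompl hq (by omega) hqdvd
          simp [Finsupp.erase_ne hqp]
        rwa [this] at hqr

/-- The key reciprocal-sum bound over prime powers `q ≤ X` with `c ∣ σ(q)`. -/
lemma sum_inv_primepow (c : ℕ) (hc : 2 ≤ c) (X : ℝ) (hX : 1 ≤ X) :
    ∑ q ∈ (Icc 1 ⌊X⌋₊).filter (fun q => IsPrimePow q ∧ c ∣ sigmaFn q), (1 / q : ℝ)
      ≤ 3 * (1 + Real.log X) ^ 2 / c := by
  classical
  set N := ⌊X⌋₊ with hN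
  have hN1 : 1 ≤ N := Nat.le_floor (by exact_mod_cast hX)
  have hNX : (N : ℝ) ≤ X := Nat.floor_le (by linarith)
  set Q := (Icc 1 N).filter (fun q => IsPrimePow q ∧ c ∣ sigmaFn q) with hQ
  set A := Nat.log 2 N with hA
  set e : ℕ → ℕ × ℕ := fun q => (Omega q, sigmaFn q / c) with he
  set F : ℕ × ℕ → ℝ := fun p => 2 / ((c : ℝ) * p.2) with hF
  have key : ∀ q ∈ Q, e q ∈ Icc 1 A ×ˢ Icc 1 N ∧ (1 / q : ℝ) ≤ F (e q) := by
    intro q hq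
    simp only [hQ, mem_filter, mem_Icc] at hq
    obtain ⟨⟨hq1, hqN⟩, hpp, hcdvd⟩ := hq
    obtain ⟨p, a, hp, ha, rfl⟩ := hpp
    have hp' : p.Prime := hp.nat_prime
    have hσle : sigmaFn (p ^ a) ≤ 2 * p ^ a := sigmaFn_prime_pow_le hp' a
    have hσpos : 0 < sigmaFn (p ^ a) := sigmaFn_pos (by positivity)
    have hjc : sigmaFn (p ^ a) / c * c = sigmaFn (p ^ a) := Nat.div_mul_cancel hcdvd
    set j := sigmaFn (p ^ a) / c with hj
    have hj1 : 1 ≤ j := (Nat.one_le_div_iff (by omega)).mpr (Nat.le_of_dvd hσpos hcdvd)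
    have hjle : j * c ≤ 2 * p ^ a := hjc ▸ hσle
    have hj2 : j * 2 ≤ j * c := Nat.mul_le_mul_left j hc
    have hjN : j ≤ N := by omega
    have haA : a ≤ A := by
      rw [hA]
      have h2a : 2 ^ a ≤ N := le_trans (Nat.pow_le_pow_left hp'.two_le a) hqN
      exact (Nat.le_log_iff_pow_le (by norm_num) (by omega)).mpr h2a
    refine ⟨?_, ?_⟩
    · simp only [he, mem_product, mem_Icc, Omega_prime_pow hp' a]
      exact ⟨⟨ha, haA⟩, hj1, hjN⟩
    · show (1 / (p ^ a : ℕ) : ℝ) ≤ 2 / ((c : ℝ) * j)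
      rw [div_le_div_iff₀ (by positivity) (by positivity)]
      have hcast : (j : ℝ) * c ≤ 2 * (p ^ a : ℕ) := by exact_mod_cast hjle
      nlinarith
  have hinj : Set.InjOn e Q := by
    intro q1 h1 q2 h2 heq
    rw [Finset.mem_coe, hQ, mem_filter] at h1 h2
    obtain ⟨-, hpp1, hc1⟩ := h1
    obtain ⟨-, hpp2, hc2⟩ := h2
    obtain ⟨p1, a1, hp1, ha1, rfl⟩ := hpp1
    obtain ⟨p2, a2, hp2, ha2, rfl⟩ := hpp2
    have hp1' := hp1.nat_prime; have hp2' := hp2.nat_prime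
    simp only [he, Prod.mk.injEq, Omega_prime_pow hp1', Omega_prime_pow hp2'] at heq
    obtain ⟨rfl, hjeq⟩ := heq
    have hσeq : sigmaFn (p1 ^ a1) = sigmaFn (p2 ^ a1) := by
      have e1 : sigmaFn (p1 ^ a1) / c * c = sigmaFn (p1 ^ a1) := Nat.div_mul_cancel hc1
      have e2 : sigmaFn (p2 ^ a1) / c * c = sigmaFn (p2 ^ a1) := Nat.div_mul_cancel hc2
      rw [← e1, hjeq, e2]
    rcases lt_trichotomy p1 p2 with h | h | h
    · exact absurd hσeq (sigmaFn_pp_strictmono ha1 hp1' hp2' h).ne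
    · rw [h]
    · exact absurd hσeq.symm (sigmaFn_pp_strictmono ha1 hp2' hp1' h).ne
  have hlog2 : (A : ℝ) * Real.log 2 ≤ Real.log X := by
    have h2a : (2 : ℕ) ^ A ≤ N := Nat.pow_log_le_self 2 (by omega)
    have : ((2 : ℕ) ^ A : ℝ) ≤ X := le_trans (by exact_mod_cast h2a) hNX
    calc (A : ℝ) * Real.log 2 = Real.log ((2:ℝ) ^ A) := by rw [Real.log_pow]
      _ ≤ Real.log X := Real.log_le_log (by positivity) (by exact_mod_cast this)
  have hlogN : Real.log N ≤ Real.log X := Real.log_le_log (by exact_mod_cast hN1) hNX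
  have hlogX0 : 0 ≤ Real.log X := Real.log_nonneg hX
  calc ∑ q ∈ Q, (1 / q : ℝ) ≤ ∑ q ∈ Q, F (e q) :=
        Finset.sum_le_sum (fun q hq => (key q hq).2)
    _ = ∑ p ∈ Q.image e, F p := (Finset.sum_image (fun a ha b hb h => hinj ha hb h)).symm
    _ ≤ ∑ p ∈ Icc 1 A ×ˢ Icc 1 N, F p := by
        apply Finset.sum_le_sum_of_subset_of_nonneg
        · intro p hp
          obtain ⟨q, hq, rfl⟩ := Finset.mem_image.mp hp
          exact (key q hq).1
        · intro p _ _; rw [hF]; positivity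
    _ = ∑ _x ∈ Icc 1 A, ∑ y ∈ Icc 1 N, 2 / ((c:ℝ) * y) := by
        rw [Finset.sum_product]
    _ = (A : ℝ) * ((2 / c) * ∑ j ∈ Icc 1 N, (j : ℝ)⁻¹) := by
        rw [Finset.sum_const, Nat.card_Icc, Nat.add_sub_cancel, nsmul_eq_mul]
        congr 1
        rw [Finset.mul_sum]
        apply Finset.sum_congr rfl
        intro j _
        field_simp
    _ ≤ (A : ℝ) * ((2 / c) * (1 + Real.log N)) := by
        have hharm2 : ∑ j ∈ Icc 1 N, ((j : ℝ))⁻¹ ≤ 1 + Real.log N := by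
          have h := harmonic_le_one_add_log N
          rw [harmonic_eq_sum_Icc] at h
          push_cast at h
          exact h
        have : (0:ℝ) ≤ A := Nat.cast_nonneg A
        have : (0:ℝ) < c := by positivity
        apply mul_le_mul_of_nonneg_left _ (Nat.cast_nonneg A)
        apply mul_le_mul_of_nonneg_left hharm2 (by positivity)
    _ ≤ 3 * (1 + Real.log X) ^ 2 / c := by
        have hA1 : (A : ℝ) ≤ Real.log X / Real.log 2 := by
          rw [le_div_iff₀ (Real.log_pos (by norm_num))]; exact hlog2
        have hlog2' : (0.693 : ℝ) ≤ Real.log 2 := by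
          have := Real.log_two_gt_d9
          linarith
        have hA2 : (A : ℝ) ≤ Real.log X / 0.693 := by
          apply hA1.trans
          apply div_le_div_of_nonneg_left hlogX0 (by norm_num) hlog2'
        have hcpos : (0:ℝ) < c := by positivity
        have h1N : 1 + Real.log N ≤ 1 + Real.log X := by linarith
        have hAp : (0:ℝ) ≤ (A:ℝ) := Nat.cast_nonneg A
        have key2 : (A : ℝ) * (2 * (1 + Real.log N)) ≤ 3 * (1 + Real.log X)^2 := by
          have h1 : (A : ℝ) * (2 * (1 + Real.log N)) ≤ (Real.log X / 0.693) * (2 * (1 + Real.log X)) := by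
            apply mul_le_mul hA2 (by linarith) (by positivity) (by positivity)
          apply h1.trans
          rw [div_mul_eq_mul_div, div_le_iff₀ (by norm_num : (0.693:ℝ) > 0)]
          nlinarith [sq_nonneg (Real.log X)]
        have heq : (A:ℝ) * (2 / c * (1 + Real.log N)) = (A:ℝ) * (2 * (1 + Real.log N)) / c := by
          field_simp
        rw [heq]
        gcongr

lemma geom_tail_le_s13 {t : ℝ} (h0 : 0 ≤ t) (h8 : t ≤ 1/8) (ℓ : ℕ) :
    ∑ j ∈ Finset.Icc 1 ℓ, t ^ j ≤ (8/7) * t := by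
  rw [show Finset.Icc 1 ℓ = Finset.Ico 1 (ℓ+1) by rw [Finset.Ico_add_one_right_eq_Icc], Finset.sum_Ico_eq_sum_range]
  have h1 : ∀ i ∈ Finset.range (ℓ + 1 - 1), t ^ (1 + i) ≤ t * (1/8 : ℝ) ^ i := by
    intro i _
    rw [pow_add, pow_one]
    exact mul_le_mul_of_nonneg_left (pow_le_pow_left₀ h0 h8 i) h0
  calc ∑ i ∈ Finset.range (ℓ + 1 - 1), t ^ (1 + i)
      ≤ ∑ i ∈ Finset.range (ℓ + 1 - 1), t * (1/8 : ℝ) ^ i := Finset.sum_le_sum h1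
    _ = t * ∑ i ∈ Finset.range (ℓ + 1 - 1), (1/8 : ℝ) ^ i := by rw [Finset.mul_sum]
    _ ≤ (8/7) * t := by
        have hgeom : ∑ i ∈ Finset.range (ℓ + 1 - 1), (1/8 : ℝ) ^ i
            = (1 - (1/8 : ℝ) ^ (ℓ + 1 - 1)) / (1 - 1/8) := by
          rw [geom_sum_eq (by norm_num)]
          ring_nf
        rw [hgeom]
        have hp : (0:ℝ) ≤ (1/8 : ℝ) ^ (ℓ + 1 - 1) := by positivity
        have hid : t * ((1 - (1/8 : ℝ) ^ (ℓ + 1 - 1)) / (1 - 1/8))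
            = 8/7 * t - 8/7 * (t * (1/8 : ℝ) ^ (ℓ + 1 - 1)) := by ring
        rw [hid]
        linarith [mul_nonneg h0 hp]

lemma primeFactorsList_multiset_le {c d : ℕ} (hc : c ≠ 0) (hd : d ≠ 0) (h : c ∣ d) :
    (c.primeFactorsList : Multiset ℕ) ≤ (d.primeFactorsList : Multiset ℕ) := by
  rw [Multiset.le_iff_count]
  intro p
  rw [Multiset.coe_count, Multiset.coe_count,
    Nat.primeFactorsList_count_eq, Nat.primeFactorsList_count_eq]
  exact (Nat.factorization_le_iff_dvd hc hd).mpr h p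

/-- Main bound, by strong induction on `Ω(d)`. -/
lemma main_bound (X : ℝ) (hX : 1 ≤ X) :
    ∀ ℓ : ℕ, ∀ d : ℕ, 0 < d → Omega d = ℓ → ∀ x : ℝ, 1 ≤ x → x ≤ X →
    (((Finset.Icc 1 ⌊x⌋₊).filter (fun n => d ∣ sigmaFn n)).card : ℝ) ≤
      (x / d) * (8 * ℓ * (1 + Real.log X) ^ 2) ^ ℓ := by
  intro ℓ
  induction ℓ using Nat.strong_induction_on with
  | _ ℓ ih =>
    intro d hd hΩ x hx1 hxX
    set L2 : ℝ := (1 + Real.log X) ^ 2 with hL2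
    have hlogX : 0 ≤ Real.log X := Real.log_nonneg hX
    have hL2one : (1:ℝ) ≤ L2 := by nlinarith
    rcases Nat.eq_zero_or_pos ℓ with rfl | hℓ
    · -- base case : d = 1
      have hd1 : d = 1 := (Omega_eq_zero_iff hd).mp hΩ
      subst hd1
      simp only [pow_zero, mul_one, Nat.cast_one, div_one]
      calc ((Finset.Icc 1 ⌊x⌋₊).filter (fun n => 1 ∣ sigmaFn n)).card
            ≤ ((Finset.Icc 1 ⌊x⌋₊).card : ℝ) := by
              exact_mod_cast Finset.card_filter_le _ _
        _ = (⌊x⌋₊ : ℝ) := by rw [Nat.card_Icc]; simp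
        _ ≤ x := Nat.floor_le (by linarith)
    · -- inductive step
      have hd2 : 2 ≤ d := by
        rcases Nat.lt_or_ge d 2 with h | h
        · exfalso
          have hd1 : d = 1 := by omega
          subst hd1
          rw [(Omega_eq_zero_iff one_pos).mpr rfl] at hΩ
          omega
        · exact h
      set m : Multiset ℕ := (d.primeFactorsList : Multiset ℕ) with hm
      have hcardm : Multiset.card m = ℓ := by
        rw [hm, Multiset.coe_card]; exact hΩ
      set QQ : ℕ → Finset ℕ := fun c =>
        (Icc 1 ⌊x⌋₊).filter (fun q => IsPrimePow q ∧ c ∣ sigmaFn q) with hQQ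
      set M : ℕ → ℕ → Finset ℕ := fun c q =>
        (Icc 1 ⌊x / q⌋₊).filter (fun n => (d / c) ∣ sigmaFn n) with hM
      -- the covering
      have cover : (Finset.Icc 1 ⌊x⌋₊).filter (fun n => d ∣ sigmaFn n) ⊆
          (Icc 1 ℓ).biUnion (fun j => ((Multiset.powersetCard j m).toFinset).biUnion
            (fun T => (QQ T.prod).biUnion
              (fun q => (M T.prod q).image (· * q)))) := by
        intro n hn
        simp only [mem_filter, mem_Icc] at hn
        obtain ⟨⟨hn1, hnx⟩, hdvd⟩ := hn
        have hn0 : n ≠ 0 := by omega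
        -- n ≥ 2
        have hn2 : 2 ≤ n := by
          rcases Nat.lt_or_ge n 2 with h | h
          · exfalso
            have hn1 : n = 1 := by omega
            subst hn1
            have h1 : sigmaFn 1 = 1 := by simp [sigmaFn]
            rw [h1] at hdvd
            have := Nat.eq_one_of_dvd_one hdvd
            omega
          · exact h
        set r := d.minFac with hr_def
        have hr : r.Prime := Nat.minFac_prime (by omega)
        obtain ⟨p, hp, hpn, hrσ⟩ := exists_primepow (by omega) hr (dvd_trans d.minFac_dvd hdvd)
        set e := n.factorization p with he_def
        have he1 : 1 ≤ e := Nat.Prime.factorization_pos_of_dvd hp hn0 hpn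
        set q := p ^ e with hq_def
        have hq2 : 2 ≤ q := le_trans hp.two_le (Nat.le_self_pow (by omega) p)
        have hqn : q ∣ n := Nat.ordProj_dvd n p
        set c := Nat.gcd d (sigmaFn q) with hc_def
        have hcd : c ∣ d := Nat.gcd_dvd_left _ _
        have hcσ : c ∣ sigmaFn q := Nat.gcd_dvd_right _ _
        have hrc : r ∣ c := Nat.dvd_gcd d.minFac_dvd hrσ
        have hc2 : 2 ≤ c := le_trans hr.two_le (Nat.le_of_dvd (Nat.gcd_pos_of_pos_left _ (by omega)) hrc)
        have hc0 : c ≠ 0 := by omega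
        -- the cofactor
        set n' := n / q with hn'_def
        have hn'q : n' * q = n := Nat.div_mul_cancel hqn
        have hn'0 : 0 < n' := Nat.ordCompl_pos p hn0
        have hcop : Nat.Coprime q n' := Nat.Coprime.pow_left _ (Nat.coprime_ordCompl hp hn0)
        have hσsplit : sigmaFn n = sigmaFn q * sigmaFn n' := by
          conv_lhs => rw [← Nat.ordProj_mul_ordCompl_eq_self n p]
          exact sigmaFn_mul hcop
        -- d / c divides sigmaFn n'
        have hdc : d / c ∣ sigmaFn n' := by
          have hdeq : c * (d / c) = d := Nat.mul_div_cancel' hcd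
          have hσeq : c * (sigmaFn q / c) = sigmaFn q := Nat.mul_div_cancel' hcσ
          have h1 : c * (d / c) ∣ c * ((sigmaFn q / c) * sigmaFn n') := by
            rw [hdeq, ← mul_assoc, hσeq, ← hσsplit]; exact hdvd
          have h2 : d / c ∣ (sigmaFn q / c) * sigmaFn n' :=
            (mul_dvd_mul_iff_left (by omega : c ≠ 0)).mp h1
          have hcop2 : Nat.Coprime (d / c) (sigmaFn q / c) :=
            Nat.coprime_div_gcd_div_gcd (Nat.gcd_pos_of_pos_left _ (by omega))
          exact hcop2.dvd_of_dvd_mul_left h2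
        -- the multiset T
        set T : Multiset ℕ := (c.primeFactorsList : Multiset ℕ) with hT
        have hTprod : T.prod = c := by
          rw [hT]
          exact_mod_cast Nat.prod_primeFactorsList hc0
        have hTcard : Multiset.card T = Omega c := by rw [hT, Multiset.coe_card]; rfl
        have hΩc1 : 1 ≤ Omega c := by
          rcases Nat.eq_zero_or_pos (Omega c) with h | h
          · rw [(Omega_eq_zero_iff (by omega)).mp h] at hc2; omega
          · exact h
        have hΩsplit : Omega c + Omega (d / c) = ℓ := by
          rw [← Omega_mul_s13 hc0 (by
            have : 0 < d / c := Nat.div_pos (Nat.le_of_dvd (by omega) hcd) (by omega)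
            omega), Nat.mul_div_cancel' hcd, hΩ]
        rw [Finset.mem_biUnion]
        refine ⟨Omega c, by simp only [mem_Icc]; omega, ?_⟩
        rw [Finset.mem_biUnion]
        refine ⟨T, ?_, ?_⟩
        · rw [Multiset.mem_toFinset, Multiset.mem_powersetCard]
          exact ⟨primeFactorsList_multiset_le hc0 (by omega) hcd, hTcard⟩
        rw [Finset.mem_biUnion]
        refine ⟨q, ?_, ?_⟩
        · rw [hQQ, mem_filter, mem_Icc, hTprod]
          exact ⟨⟨by omega, le_trans (Nat.le_of_dvd (by omega) hqn) hnx⟩,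
            ⟨p, e, hp.prime, by omega, rfl⟩, hcσ⟩
        · rw [Finset.mem_image]
          refine ⟨n', ?_, hn'q⟩
          rw [hM, mem_filter, mem_Icc, hTprod]
          refine ⟨⟨hn'0, ?_⟩, hdc⟩
          apply Nat.le_floor
          rw [le_div_iff₀ (by positivity : (0:ℝ) < (q:ℕ))]
          calc ((n' : ℝ) * q) = ((n' * q : ℕ) : ℝ) := by push_cast; ring
            _ = (n : ℝ) := by rw [hn'q]
            _ ≤ (⌊x⌋₊ : ℝ) := by exact_mod_cast hnx
            _ ≤ x := Nat.floor_le (by linarith)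
      -- cardinality chain (natural numbers)
      have hcard : ((Finset.Icc 1 ⌊x⌋₊).filter (fun n => d ∣ sigmaFn n)).card ≤
          ∑ j ∈ Icc 1 ℓ, ∑ T ∈ (Multiset.powersetCard j m).toFinset,
            ∑ q ∈ QQ T.prod, (M T.prod q).card := by
        calc ((Finset.Icc 1 ⌊x⌋₊).filter (fun n => d ∣ sigmaFn n)).card
            ≤ _ := Finset.card_le_card cover
          _ ≤ ∑ j ∈ Icc 1 ℓ, (((Multiset.powersetCard j m).toFinset).biUnion
              (fun T => (QQ T.prod).biUnion (fun q => (M T.prod q).image (· * q)))).card :=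
              Finset.card_biUnion_le
          _ ≤ ∑ j ∈ Icc 1 ℓ, ∑ T ∈ (Multiset.powersetCard j m).toFinset,
              ((QQ T.prod).biUnion (fun q => (M T.prod q).image (· * q))).card :=
              Finset.sum_le_sum (fun j _ => Finset.card_biUnion_le)
          _ ≤ ∑ j ∈ Icc 1 ℓ, ∑ T ∈ (Multiset.powersetCard j m).toFinset,
              ∑ q ∈ QQ T.prod, ((M T.prod q).image (· * q)).card :=
              Finset.sum_le_sum (fun j _ => Finset.sum_le_sum (fun T _ => Finset.card_biUnion_le))
          _ ≤ _ := Finset.sum_le_sum (fun j _ => Finset.sum_le_sum (fun T _ =>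
              Finset.sum_le_sum (fun q _ => Finset.card_image_le)))
      -- now real estimates
      set B : ℝ := 8 * ℓ * L2 with hB
      have hBpos : (0:ℝ) < B := by
        have : (1:ℝ) ≤ (ℓ:ℝ) := by exact_mod_cast hℓ
        nlinarith
      -- bound for each individual (j, T, q)
      have hinner : ∀ j ∈ Icc 1 ℓ, ∀ T ∈ (Multiset.powersetCard j m).toFinset,
          ∀ q ∈ QQ T.prod, ((M T.prod q).card : ℝ) ≤
            (x * T.prod / (q * d)) * B ^ (ℓ - j) := by
        intro j hj T hTmem q hq
        rw [mem_Icc] at hj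
        rw [Multiset.mem_toFinset, Multiset.mem_powersetCard] at hTmem
        obtain ⟨hTle, hTcard⟩ := hTmem
        have hTprime : ∀ p ∈ T, p.Prime := by
          intro p hp
          have hpm : p ∈ m := Multiset.mem_of_le hTle hp
          rw [hm, Multiset.mem_coe] at hpm
          exact Nat.prime_of_mem_primeFactorsList hpm
        set c := T.prod with hc_def
        have hcpos : 0 < c := Multiset.prod_pos (fun p hp => (hTprime p hp).pos)
        have hΩc : Omega c = j := by rw [Omega_multiset_prod T hTprime, hTcard]
        have hcd : c ∣ d := by
          have h1 : T.prod ∣ m.prod := Multiset.prod_dvd_prod_of_le hTle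
          rwa [hm, show ((d.primeFactorsList : Multiset ℕ)).prod = d from
            by exact_mod_cast Nat.prod_primeFactorsList (by omega)] at h1
        have hc2 : 2 ≤ c := by
          rcases Nat.lt_or_ge c 2 with h | h
          · exfalso
            have hc1 : c = 1 := by omega
            rw [hc1, (Omega_eq_zero_iff one_pos).mpr rfl] at hΩc
            omega
          · exact h
        have hd'pos : 0 < d / c := Nat.div_pos (Nat.le_of_dvd (by omega) hcd) hcpos
        have hΩd' : Omega (d / c) = ℓ - j := by
          have := Omega_mul_s13 (by omega : c ≠ 0) (by omega : d / c ≠ 0)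
          rw [Nat.mul_div_cancel' hcd] at this
          omega
        -- q facts
        rw [hQQ, mem_filter, mem_Icc] at hq
        obtain ⟨⟨hq1, hqx⟩, hqpp, hqσ⟩ := hq
        have hqR : (1:ℝ) ≤ (q:ℝ) := by exact_mod_cast hq1
        have hqX : (q:ℝ) ≤ x := le_trans (by exact_mod_cast hqx) (Nat.floor_le (by linarith))
        have hxq1 : (1:ℝ) ≤ x / q := (one_le_div (by linarith)).mpr hqX
        have hxqX : x / q ≤ X := le_trans (by
          apply div_le_self (by linarith) hqR) hxX
        -- apply induction hypothesis
        have ihapp := ih (ℓ - j) (by omega) (d / c) hd'pos hΩd' (x / q) hxq1 hxqX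
        -- massage
        have hcast : ((d / c : ℕ) : ℝ) = (d : ℝ) / c := Nat.cast_div hcd (by positivity)
        rw [hcast] at ihapp
        have heq : x / q / ((d:ℝ) / c) = x * c / (q * d) := by
          field_simp
        rw [heq] at ihapp
        refine le_trans ihapp ?_
        apply mul_le_mul_of_nonneg_left _ (by positivity)
        apply pow_le_pow_left₀ (by positivity)
        have : ((ℓ - j : ℕ) : ℝ) ≤ (ℓ : ℝ) := by exact_mod_cast Nat.sub_le ℓ j
        nlinarith
      -- the q-sum bound
      have hQsum : ∀ c : ℕ, 2 ≤ c → ∑ q ∈ QQ c, (1 / q : ℝ) ≤ 3 * L2 / c := by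
        intro c hc
        refine le_trans (sum_inv_primepow c hc x hx1) ?_
        have hlogx : (0:ℝ) ≤ Real.log x := Real.log_nonneg hx1
        have hlog : Real.log x ≤ Real.log X := Real.log_le_log (by linarith) hxX
        rw [hL2]
        have h1x : (0:ℝ) ≤ 1 + Real.log x := by linarith
        gcongr
      -- per-(j,T) bound on the q-sum
      have hTbound : ∀ j ∈ Icc 1 ℓ, ∀ T ∈ (Multiset.powersetCard j m).toFinset,
          ∑ q ∈ QQ T.prod, ((M T.prod q).card : ℝ) ≤ (x / d) * (3 * L2) * B ^ (ℓ - j) := by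
        intro j hj T hTmem
        have hTmem' := hTmem
        rw [Multiset.mem_toFinset, Multiset.mem_powersetCard] at hTmem'
        obtain ⟨hTle, hTcard⟩ := hTmem'
        have hTprime : ∀ p ∈ T, p.Prime := by
          intro p hp
          have hpm : p ∈ m := Multiset.mem_of_le hTle hp
          rw [hm, Multiset.mem_coe] at hpm
          exact Nat.prime_of_mem_primeFactorsList hpm
        have hcpos : 0 < T.prod := Multiset.prod_pos (fun p hp => (hTprime p hp).pos)
        have hΩc : Omega T.prod = j := by rw [Omega_multiset_prod T hTprime, hTcard]
        have hc2 : 2 ≤ T.prod := by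
          rcases Nat.lt_or_ge T.prod 2 with h | h
          · exfalso
            have hc1 : T.prod = 1 := by omega
            rw [hc1, (Omega_eq_zero_iff one_pos).mpr rfl] at hΩc
            rw [mem_Icc] at hj
            omega
          · exact h
        calc ∑ q ∈ QQ T.prod, ((M T.prod q).card : ℝ)
            ≤ ∑ q ∈ QQ T.prod, (x * T.prod / (q * d)) * B ^ (ℓ - j) :=
              Finset.sum_le_sum (fun q hq => hinner j hj T hTmem q hq)
          _ = (x * T.prod / d * B ^ (ℓ - j)) * ∑ q ∈ QQ T.prod, (1 / q : ℝ) := by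
              rw [Finset.mul_sum]
              apply Finset.sum_congr rfl
              intro q _
              ring
          _ ≤ (x * T.prod / d * B ^ (ℓ - j)) * (3 * L2 / T.prod) := by
              apply mul_le_mul_of_nonneg_left (hQsum T.prod hc2) (by positivity)
          _ = (x / d) * (3 * L2) * B ^ (ℓ - j) := by
              have h1 : (T.prod : ℝ) ≠ 0 := by positivity
              have h2 : x * (T.prod:ℝ) / d * B ^ (ℓ - j) * (3 * L2 / T.prod)
                  = (x / d) * (3 * L2) * B ^ (ℓ - j) * ((T.prod:ℝ) / T.prod) := by ring
              rw [h2, div_self h1, mul_one]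
      -- count the number of T's
      have hTcount : ∀ j, ((Multiset.powersetCard j m).toFinset.card : ℝ) ≤ (ℓ : ℝ) ^ j := by
        intro j
        have h1 : (Multiset.powersetCard j m).toFinset.card ≤
            Multiset.card (Multiset.powersetCard j m) := Multiset.toFinset_card_le _
        have h2 : Multiset.card (Multiset.powersetCard j m) = ℓ.choose j := by
          rw [Multiset.card_powersetCard, hcardm]
        have h3 : ℓ.choose j ≤ ℓ ^ j := by
          calc ℓ.choose j ≤ ℓ.descFactorial j := Nat.choose_le_descFactorial ℓ j
            _ ≤ ℓ ^ j := Nat.descFactorial_le_pow ℓ j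
        exact_mod_cast le_trans h1 (h2 ▸ h3)
      -- geometric-sum estimate
      have hL2ne : L2 ≠ 0 := by positivity
      have hℓne : (ℓ:ℝ) ≠ 0 := by positivity
      have hgeom : ∑ j ∈ Icc 1 ℓ, (ℓ : ℝ) ^ j * B ^ (ℓ - j) ≤ B ^ ℓ * (1 / (7 * L2)) := by
        have hterm : ∀ j ∈ Icc 1 ℓ, (ℓ:ℝ) ^ j * B ^ (ℓ - j) = B ^ ℓ * (1/(8*L2)) ^ j := by
          intro j hj
          rw [mem_Icc] at hj
          rw [pow_sub₀ _ hBpos.ne' hj.2]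
          rw [show (1/(8*L2) : ℝ) = (ℓ:ℝ)/B by rw [hB]; field_simp]
          rw [div_pow]
          field_simp
        rw [Finset.sum_congr rfl hterm, ← Finset.mul_sum]
        have ht8 : (1/(8*L2) : ℝ) ≤ 1/8 := by
          rw [div_le_div_iff₀ (by positivity) (by norm_num)]
          linarith
        have := geom_tail_le_s13 (t := 1/(8*L2)) (by positivity) ht8 ℓ
        calc B ^ ℓ * ∑ j ∈ Icc 1 ℓ, (1/(8*L2) : ℝ) ^ j
            ≤ B ^ ℓ * ((8/7) * (1/(8*L2))) := by
              apply mul_le_mul_of_nonneg_left this (by positivity)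
          _ = B ^ ℓ * (1 / (7 * L2)) := by field_simp
      -- assemble everything
      calc (((Finset.Icc 1 ⌊x⌋₊).filter (fun n => d ∣ sigmaFn n)).card : ℝ)
          ≤ ∑ j ∈ Icc 1 ℓ, ∑ T ∈ (Multiset.powersetCard j m).toFinset,
              ∑ q ∈ QQ T.prod, ((M T.prod q).card : ℝ) := by exact_mod_cast hcard
        _ ≤ ∑ j ∈ Icc 1 ℓ, ∑ T ∈ (Multiset.powersetCard j m).toFinset,
              (x / d) * (3 * L2) * B ^ (ℓ - j) :=
            Finset.sum_le_sum (fun j hj => Finset.sum_le_sum (fun T hT => hTbound j hj T hT))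
        _ = ∑ j ∈ Icc 1 ℓ, ((Multiset.powersetCard j m).toFinset.card : ℝ) *
              ((x / d) * (3 * L2) * B ^ (ℓ - j)) := by
            apply Finset.sum_congr rfl
            intro j _
            rw [Finset.sum_const, nsmul_eq_mul]
        _ ≤ ∑ j ∈ Icc 1 ℓ, (ℓ:ℝ) ^ j * ((x / d) * (3 * L2) * B ^ (ℓ - j)) := by
            apply Finset.sum_le_sum
            intro j _
            apply mul_le_mul_of_nonneg_right (hTcount j)
            have : (0:ℝ) ≤ x / d := by positivity
            positivity
        _ = (x / d) * (3 * L2) * ∑ j ∈ Icc 1 ℓ, (ℓ:ℝ) ^ j * B ^ (ℓ - j) := by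
            rw [Finset.mul_sum]
            apply Finset.sum_congr rfl
            intro j _
            ring
        _ ≤ (x / d) * (3 * L2) * (B ^ ℓ * (1 / (7 * L2))) := by
            apply mul_le_mul_of_nonneg_left hgeom
            have : (0:ℝ) ≤ x / d := by positivity
            positivity
        _ ≤ (x / d) * B ^ ℓ := by
            have heq : (x / d) * (3 * L2) * (B ^ ℓ * (1 / (7 * L2)))
                = (x / d) * B ^ ℓ * (3/7) := by field_simp
            rw [heq]
            have h1 : (0:ℝ) ≤ (x / d) * B ^ ℓ := by positivity
            linarith

theorem count_sigma_divisible (d : ℕ) (hd : 0 < d) (x : ℝ) (hx : 1 ≤ x) :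
    (((Finset.Icc 1 ⌊x⌋₊).filter (fun n => d ∣ sigmaFn n)).card : ℝ) ≤
      (x / d) * (8 * (Omega d) * Real.log (Real.exp 1 * x) ^ 2) ^ (Omega d) := by
  have h := main_bound x hx (Omega d) d hd rfl x hx le_rfl
  have hlog : Real.log (Real.exp 1 * x) = 1 + Real.log x := by
    rw [Real.log_mul (Real.exp_ne_zero 1) (by linarith), Real.log_exp]
  rw [hlog]
  exact h
end

section
/- Fix a positive integer k and fix a ∈ {φ, σ}. For all sufficiently large positive integers n, every positive integer m satisfying a_k(m) = n (where a_k is the k-th iterate of a) satisfies m ≤ n · log(2n). -/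
open Finset

/-- Dyadic block of primes in `(2^j, 2^(j+1)]`. -/
def pblock (j : ℕ) : Finset ℕ := (Finset.Ioc (2^j) (2^(j+1))).filter Nat.Prime

lemma pblock_card_mul (j : ℕ) : (pblock j).card * j ≤ 2^(j+2) := by
  have h1 : (2^j : ℕ)^(pblock j).card ≤ ∏ p ∈ pblock j, p := by
    apply Finset.pow_card_le_prod
    intro p hp
    exact le_of_lt (Finset.mem_Ioc.mp (Finset.mem_filter.mp hp).1).1
  have h2 : (∏ p ∈ pblock j, p) ∣ primorial (2^(j+1)) := by
    apply Finset.prod_dvd_prod_of_subset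
    intro p hp
    simp only [pblock, Finset.mem_filter, Finset.mem_Ioc] at hp
    simp only [primorial, Finset.mem_filter, Finset.mem_range]
    exact ⟨Nat.lt_succ_of_le hp.1.2, hp.2⟩
  have h3 : (∏ p ∈ pblock j, p) ≤ 2^(2^(j+2)) := by
    calc (∏ p ∈ pblock j, p) ≤ primorial (2^(j+1)) := Nat.le_of_dvd (primorial_pos _) h2
    _ ≤ 4^(2^(j+1)) := primorial_le_4_pow _
    _ = 2^(2^(j+2)) := by
        rw [show (4:ℕ) = 2^2 by norm_num, ← pow_mul, pow_succ (2:ℕ) (j+1)]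
        ring_nf
  have h4 : (2:ℕ)^(j * (pblock j).card) ≤ 2^(2^(j+2)) := by
    rw [pow_mul]; exact le_trans h1 h3
  rw [mul_comm]
  exact (Nat.pow_le_pow_iff_right one_lt_two).mp h4

lemma pblock_sum (j : ℕ) (hj : 1 ≤ j) :
    ∑ p ∈ pblock j, ((p:ℝ)-1)⁻¹ ≤ 4 / j := by
  have hterm : ∀ p ∈ pblock j, ((p:ℝ)-1)⁻¹ ≤ ((2:ℝ)^j)⁻¹ := by
    intro p hp
    have hp' := (Finset.mem_Ioc.mp (Finset.mem_filter.mp hp).1).1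
    have h2 : (2:ℝ)^j ≤ (p:ℝ) - 1 := by
      have h : (2:ℕ)^j + 1 ≤ p := hp'
      have := (Nat.cast_le (α := ℝ)).mpr h
      push_cast at this
      linarith
    exact inv_anti₀ (by positivity) h2
  have hcard : ((pblock j).card : ℝ) * j ≤ 2^(j+2) := by
    exact_mod_cast Nat.cast_le.mpr (pblock_card_mul j)
  have hj' : (0:ℝ) < j := by exact_mod_cast hj
  calc ∑ p ∈ pblock j, ((p:ℝ)-1)⁻¹ ≤ (pblock j).card • ((2:ℝ)^j)⁻¹ :=
        Finset.sum_le_card_nsmul _ _ _ hterm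
  _ = ((pblock j).card : ℝ) / 2^j := by rw [nsmul_eq_mul]; ring
  _ ≤ 4 / j := by
      rw [div_le_div_iff₀ (by positivity) hj']
      have : ((2:ℝ))^(j+2) = 4 * 2^j := by rw [pow_add]; ring
      nlinarith [hcard]

lemma term_nonneg {p : ℕ} (hp : p.Prime) : (0:ℝ) ≤ ((p:ℝ)-1)⁻¹ := by
  have h2 : (2:ℝ) ≤ p := by exact_mod_cast hp.two_le
  have : (0:ℝ) < (p:ℝ)-1 := by linarith
  positivity

lemma primes_sum (J : ℕ) :
    ∑ p ∈ (Finset.range (2^(J+1)+1)).filter Nat.Prime, ((p:ℝ)-1)⁻¹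
      ≤ 2 + ∑ j ∈ Finset.Icc 1 J, 4 / (j:ℝ) := by
  induction J with
  | zero =>
    have : (Finset.range (2^(0+1)+1)).filter Nat.Prime = {2} := by decide
    rw [this]
    norm_num
  | succ J ih =>
    have hsub : (Finset.range (2^(J+2)+1)).filter Nat.Prime ⊆
        ((Finset.range (2^(J+1)+1)).filter Nat.Prime) ∪ pblock (J+1) := by
      intro p hp
      rw [Finset.mem_filter, Finset.mem_range] at hp
      rw [Finset.mem_union, Finset.mem_filter, Finset.mem_range, pblock,
        Finset.mem_filter, Finset.mem_Ioc]
      rcases le_or_gt p (2^(J+1)) with h | h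
      · exact Or.inl ⟨Nat.lt_succ_of_le h, hp.2⟩
      · exact Or.inr ⟨⟨h, Nat.lt_succ_iff.mp hp.1⟩, hp.2⟩
    have hdisj : Disjoint ((Finset.range (2^(J+1)+1)).filter Nat.Prime) (pblock (J+1)) := by
      rw [Finset.disjoint_left]
      intro p hp hp'
      rw [Finset.mem_filter, Finset.mem_range, Nat.lt_succ_iff] at hp
      rw [pblock, Finset.mem_filter, Finset.mem_Ioc] at hp'
      exact absurd hp.1 (not_le.mpr hp'.1.1)
    have hnn : ∀ p ∈ ((Finset.range (2^(J+1)+1)).filter Nat.Prime) ∪ pblock (J+1),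
        p ∉ (Finset.range (2^(J+2)+1)).filter Nat.Prime → (0:ℝ) ≤ ((p:ℝ)-1)⁻¹ := by
      intro p hp _
      rw [Finset.mem_union, Finset.mem_filter, pblock, Finset.mem_filter] at hp
      rcases hp with h | h <;> exact term_nonneg h.2
    calc ∑ p ∈ (Finset.range (2^(J+1+1)+1)).filter Nat.Prime, ((p:ℝ)-1)⁻¹
        ≤ ∑ p ∈ ((Finset.range (2^(J+1)+1)).filter Nat.Prime) ∪ pblock (J+1), ((p:ℝ)-1)⁻¹ :=
          Finset.sum_le_sum_of_subset_of_nonneg hsub hnn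
      _ = (∑ p ∈ (Finset.range (2^(J+1)+1)).filter Nat.Prime, ((p:ℝ)-1)⁻¹)
            + ∑ p ∈ pblock (J+1), ((p:ℝ)-1)⁻¹ := Finset.sum_union hdisj
      _ ≤ (2 + ∑ j ∈ Finset.Icc 1 J, 4 / (j:ℝ)) + 4 / (J+1:ℝ) := by
          gcongr
          have := pblock_sum (J+1) (Nat.le_add_left 1 J)
          push_cast at this
          exact this
      _ = 2 + ∑ j ∈ Finset.Icc 1 (J+1), 4 / (j:ℝ) := by
          rw [Finset.sum_Icc_succ_top (Nat.le_add_left 1 J)]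
          push_cast
          ring

lemma harm (J : ℕ) : ∑ j ∈ Finset.Icc 1 J, 4 / (j:ℝ) ≤ 4 * (1 + Real.log J) := by
  have h : ∑ j ∈ Finset.Icc 1 J, 4 / (j:ℝ) = 4 * ((harmonic J : ℚ) : ℝ) := by
    rw [harmonic_eq_sum_Icc]
    push_cast
    rw [Finset.mul_sum]
    apply Finset.sum_congr rfl
    intro j _
    rw [div_eq_mul_inv]
  rw [h]
  have := harmonic_le_one_add_log J
  linarith

lemma card_primeFactors_le (m : ℕ) (hm : 1 ≤ m) : m.primeFactors.card ≤ Nat.log 2 m := by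
  have h1 : (2:ℕ)^m.primeFactors.card ≤ ∏ p ∈ m.primeFactors, p := by
    apply Finset.pow_card_le_prod
    intro p hp
    exact (Nat.prime_of_mem_primeFactors hp).two_le
  have h2 : (2:ℕ)^m.primeFactors.card ≤ m :=
    h1.trans (Nat.le_of_dvd hm (Nat.prod_primeFactors_dvd m))
  exact (Nat.le_log_iff_pow_le one_lt_two (by omega)).mpr h2

lemma S_le (m : ℕ) (hm : 1 ≤ m) :
    ∑ p ∈ m.primeFactors, ((p:ℝ)-1)⁻¹
      ≤ 7 + 4 * Real.log ((Nat.log 2 (Nat.log 2 m) + 1 : ℕ) : ℝ) := by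
  set L := Nat.log 2 m with hLdef
  set J := Nat.log 2 L + 1 with hJdef
  have hsplit := Finset.sum_filter_add_sum_filter_not m.primeFactors
    (fun p => p ≤ 2^(J+1)) (fun p => ((p:ℝ)-1)⁻¹)
  have hsmall : ∑ p ∈ m.primeFactors.filter (fun p => p ≤ 2^(J+1)), ((p:ℝ)-1)⁻¹
      ≤ 6 + 4 * Real.log J := by
    have hsub : m.primeFactors.filter (fun p => p ≤ 2^(J+1)) ⊆
        (Finset.range (2^(J+1)+1)).filter Nat.Prime := by
      intro p hp
      rw [Finset.mem_filter] at hp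
      rw [Finset.mem_filter, Finset.mem_range]
      exact ⟨Nat.lt_succ_of_le hp.2, Nat.prime_of_mem_primeFactors hp.1⟩
    calc ∑ p ∈ m.primeFactors.filter (fun p => p ≤ 2^(J+1)), ((p:ℝ)-1)⁻¹
        ≤ ∑ p ∈ (Finset.range (2^(J+1)+1)).filter Nat.Prime, ((p:ℝ)-1)⁻¹ := by
          apply Finset.sum_le_sum_of_subset_of_nonneg hsub
          intro p hp _
          exact term_nonneg (Finset.mem_filter.mp hp).2
      _ ≤ 2 + ∑ j ∈ Finset.Icc 1 J, 4 / (j:ℝ) := primes_sum J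
      _ ≤ 2 + 4 * (1 + Real.log J) := by linarith [harm J]
      _ = 6 + 4 * Real.log J := by ring
  have hbig : ∑ p ∈ m.primeFactors.filter (fun p => ¬ p ≤ 2^(J+1)), ((p:ℝ)-1)⁻¹ ≤ 1 := by
    have hcard : (m.primeFactors.filter (fun p => ¬ p ≤ 2^(J+1))).card ≤ L :=
      le_trans (Finset.card_le_card (Finset.filter_subset _ _)) (card_primeFactors_le m hm)
    have hL2J : L < 2^J := Nat.lt_pow_succ_log_self one_lt_two L
    have hterm : ∀ p ∈ m.primeFactors.filter (fun p => ¬ p ≤ 2^(J+1)),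
        ((p:ℝ)-1)⁻¹ ≤ ((2:ℝ)^(J+1))⁻¹ := by
      intro p hp
      rw [Finset.mem_filter, not_le] at hp
      have h : (2:ℕ)^(J+1) + 1 ≤ p := hp.2
      have h' : (2:ℝ)^(J+1) + 1 ≤ (p:ℝ) := by exact_mod_cast h
      apply inv_anti₀ (by positivity)
      linarith
    calc ∑ p ∈ m.primeFactors.filter (fun p => ¬ p ≤ 2^(J+1)), ((p:ℝ)-1)⁻¹
        ≤ (m.primeFactors.filter (fun p => ¬ p ≤ 2^(J+1))).card • ((2:ℝ)^(J+1))⁻¹ :=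
          Finset.sum_le_card_nsmul _ _ _ hterm
      _ ≤ (L:ℝ) * ((2:ℝ)^(J+1))⁻¹ := by
          rw [nsmul_eq_mul]
          apply mul_le_mul_of_nonneg_right (by exact_mod_cast hcard) (by positivity)
      _ ≤ 1 := by
          have : (L:ℝ) ≤ 2^J := by
            have := hL2J.le
            exact_mod_cast this
          rw [pow_succ]
          rw [mul_inv]
          have h2J : (0:ℝ) < 2^J := by positivity
          calc (L:ℝ) * (((2:ℝ)^J)⁻¹ * 2⁻¹) ≤ (2:ℝ)^J * (((2:ℝ)^J)⁻¹ * 2⁻¹) := by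
                apply mul_le_mul_of_nonneg_right this (by positivity)
            _ = 2⁻¹ := by field_simp
            _ ≤ 1 := by norm_num
  rw [← hsplit]
  push_cast
  push_cast at hsmall
  linarith

noncomputable def Gr (m : ℕ) : ℝ :=
  Real.exp 7 * ((Nat.log 2 (Nat.log 2 m) + 1 : ℕ) : ℝ)^4

lemma one_le_Gr (m : ℕ) : 1 ≤ Gr m := by
  have h1 : (1:ℝ) ≤ Real.exp 7 := Real.one_le_exp (by norm_num)
  have h2 : (1:ℝ) ≤ ((Nat.log 2 (Nat.log 2 m) + 1 : ℕ) : ℝ)^4 := by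
    apply one_le_pow₀
    exact_mod_cast Nat.succ_le_succ (Nat.zero_le _)
  unfold Gr; nlinarith

lemma Gr_mono {m m' : ℕ} (h : m ≤ m') : Gr m ≤ Gr m' := by
  unfold Gr
  have : Nat.log 2 (Nat.log 2 m) + 1 ≤ Nat.log 2 (Nat.log 2 m') + 1 :=
    Nat.succ_le_succ (Nat.log_mono_right (Nat.log_mono_right h))
  have hc : ((Nat.log 2 (Nat.log 2 m) + 1 : ℕ) : ℝ) ≤ ((Nat.log 2 (Nat.log 2 m') + 1 : ℕ) : ℝ) := by
    exact_mod_cast this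
  have := Real.exp_pos 7
  gcongr

lemma key (m : ℕ) (hm : 1 ≤ m) : (m:ℝ) ≤ (Nat.totient m : ℝ) * Gr m := by
  have hQ := Nat.totient_eq_mul_prod_factors m
  have hR : (Nat.totient m : ℝ) = m * ∏ p ∈ m.primeFactors, (1 - (p:ℝ)⁻¹) := by
    have := congrArg (fun q : ℚ => (q : ℝ)) hQ
    push_cast at this
    exact this
  have hples : ∀ p ∈ m.primeFactors, (2:ℝ) ≤ (p:ℝ) := by
    intro p hp
    exact_mod_cast (Nat.prime_of_mem_primeFactors hp).two_le
  have hfacpos : ∀ p ∈ m.primeFactors, (0:ℝ) < 1 - (p:ℝ)⁻¹ := by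
    intro p hp
    have h2 := hples p hp
    have : (p:ℝ)⁻¹ ≤ 2⁻¹ := by
      apply inv_anti₀ (by norm_num) h2
    linarith
  have hProdpos : (0:ℝ) < ∏ p ∈ m.primeFactors, (1 - (p:ℝ)⁻¹) :=
    Finset.prod_pos hfacpos
  have hminv : (m:ℝ) = (Nat.totient m : ℝ) * (∏ p ∈ m.primeFactors, (1 - (p:ℝ)⁻¹))⁻¹ := by
    rw [hR, mul_inv_cancel_right₀ hProdpos.ne']
  have hinvprod : (∏ p ∈ m.primeFactors, (1 - (p:ℝ)⁻¹))⁻¹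
      = ∏ p ∈ m.primeFactors, (1 - (p:ℝ)⁻¹)⁻¹ := by
    rw [← Finset.prod_inv_distrib]
  have hfact : ∀ p ∈ m.primeFactors, (1 - (p:ℝ)⁻¹)⁻¹ ≤ Real.exp (((p:ℝ)-1)⁻¹) := by
    intro p hp
    have h2 := hples p hp
    have hp0 : (0:ℝ) < p := by linarith
    have hp1 : (0:ℝ) < (p:ℝ) - 1 := by linarith
    have hid : (1 - (p:ℝ)⁻¹)⁻¹ = 1 + ((p:ℝ)-1)⁻¹ := by
      field_simp
      ring
    rw [hid, add_comm]
    exact Real.add_one_le_exp _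
  have hprodle : ∏ p ∈ m.primeFactors, (1 - (p:ℝ)⁻¹)⁻¹
      ≤ Real.exp (∑ p ∈ m.primeFactors, ((p:ℝ)-1)⁻¹) := by
    rw [Real.exp_sum]
    apply Finset.prod_le_prod
    · intro p hp
      exact le_of_lt (inv_pos.mpr (hfacpos p hp))
    · exact hfact
  have hexp : Real.exp (∑ p ∈ m.primeFactors, ((p:ℝ)-1)⁻¹) ≤ Gr m := by
    have hS := S_le m hm
    have := Real.exp_le_exp.mpr hS
    calc Real.exp (∑ p ∈ m.primeFactors, ((p:ℝ)-1)⁻¹)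
        ≤ Real.exp (7 + 4 * Real.log ((Nat.log 2 (Nat.log 2 m) + 1 : ℕ) : ℝ)) := this
      _ = Gr m := by
          rw [Real.exp_add]
          unfold Gr
          congr 1
          rw [show (4:ℝ) * Real.log _ = Real.log (((Nat.log 2 (Nat.log 2 m) + 1 : ℕ) : ℝ)^4) by
            rw [Real.log_pow]; push_cast; ring]
          apply Real.exp_log
          positivity
  calc (m:ℝ) = (Nat.totient m : ℝ) * (∏ p ∈ m.primeFactors, (1 - (p:ℝ)⁻¹))⁻¹ := hminv
    _ ≤ (Nat.totient m : ℝ) * Gr m := by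
        apply mul_le_mul_of_nonneg_left _ (by positivity)
        rw [hinvprod]
        exact hprodle.trans hexp

lemma iter_key : ∀ (k m : ℕ), 1 ≤ m →
    (m:ℝ) ≤ ((Nat.totient)^[k] m : ℕ) * (Gr m)^k := by
  intro k
  induction k with
  | zero => intro m hm; simp
  | succ k ih =>
    intro m hm
    have hφ : 1 ≤ Nat.totient m := Nat.totient_pos.mpr hm
    have h2 := ih (Nat.totient m) hφ
    have hGr0 : (0:ℝ) ≤ Gr m := le_trans zero_le_one (one_le_Gr m)
    have hGr0' : (0:ℝ) ≤ Gr (Nat.totient m) := le_trans zero_le_one (one_le_Gr _)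
    have hpow : (Gr (Nat.totient m))^k ≤ (Gr m)^k :=
      pow_le_pow_left₀ hGr0' (Gr_mono (Nat.totient_le m)) k
    calc (m:ℝ) ≤ (Nat.totient m : ℝ) * Gr m := key m hm
      _ ≤ (((Nat.totient)^[k] (Nat.totient m) : ℕ) * (Gr (Nat.totient m))^k) * Gr m :=
          mul_le_mul_of_nonneg_right h2 hGr0
      _ ≤ (((Nat.totient)^[k] (Nat.totient m) : ℕ) * (Gr m)^k) * Gr m :=
          mul_le_mul_of_nonneg_right
            (mul_le_mul_of_nonneg_left hpow (Nat.cast_nonneg _)) hGr0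
      _ = ((Nat.totient)^[k+1] m : ℕ) * (Gr m)^(k+1) := by
          rw [Function.iterate_succ_apply]
          ring

lemma totient_iterate_le : ∀ (k m : ℕ), (Nat.totient)^[k] m ≤ m := by
  intro k
  induction k with
  | zero => intro m; simp
  | succ k ih =>
    intro m
    rw [Function.iterate_succ_apply]
    exact le_trans (ih _) (Nat.totient_le m)

lemma sigma_le_iter : ∀ (k m : ℕ), 1 ≤ m → m ≤ sigmaFn^[k] m := by
  intro k
  induction k with
  | zero => intro m hm; simp
  | succ k ih =>
    intro m hm
    rw [Function.iterate_succ_apply]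
    have h1 : m ≤ sigmaFn m :=
      Finset.single_le_sum (f := fun d => d) (fun i _ => Nat.zero_le i)
        (Nat.mem_divisors_self m (by omega))
    exact le_trans h1 (ih _ (le_trans hm h1))

lemma exists_j0 (k : ℕ) (hk : 0 < k) : ∃ j0 : ℕ, ∀ j : ℕ, j0 ≤ j →
    (Real.exp 7 * ((j:ℝ)+1)^4)^k + (k:ℝ) * Real.log (Real.exp 7 * ((j:ℝ)+1)^4)
      ≤ 2^j * Real.log 2 := by
  set A : ℝ := (Real.exp (7*k) + 11*k) * 2^(4*k) with hA
  have hApos : 0 < A := by positivity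
  have hlog2 : (0:ℝ) < Real.log 2 := Real.log_pos (by norm_num)
  have htends : Filter.Tendsto (fun n : ℕ => (n:ℝ)^(4*k) * (1/2:ℝ)^n) Filter.atTop (nhds 0) := by
    have hs : Summable (fun n : ℕ => (n:ℝ)^(4*k) * (1/2:ℝ)^n) := by
      apply summable_pow_mul_geometric_of_norm_lt_one
      rw [Real.norm_eq_abs, abs_of_pos (by norm_num : (0:ℝ) < 1/2)]
      norm_num
    exact hs.tendsto_atTop_zero
  have hev : ∀ᶠ j : ℕ in Filter.atTop, (j:ℝ)^(4*k) * (1/2:ℝ)^j < Real.log 2 / A := by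
    apply htends.eventually_lt_const
    positivity
  rw [Filter.eventually_atTop] at hev
  obtain ⟨j1, hj1⟩ := hev
  refine ⟨max j1 1, fun j hj => ?_⟩
  have hj1' : j1 ≤ j := le_trans (le_max_left _ _) hj
  have hjge1 : 1 ≤ j := le_trans (le_max_right _ _) hj
  have hjR : (1:ℝ) ≤ (j:ℝ) := by exact_mod_cast hjge1
  have h2j : (0:ℝ) < (2:ℝ)^j := by positivity
  have hmain : A * (j:ℝ)^(4*k) ≤ 2^j * Real.log 2 := by
    have h := hj1 j hj1'
    rw [div_pow, one_pow, mul_one_div, div_lt_div_iff₀ h2j hApos] at h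
    nlinarith [h]
  set x : ℝ := (j:ℝ) + 1 with hx
  have hx1 : (1:ℝ) ≤ x := by rw [hx]; linarith
  have hx0 : (0:ℝ) < x := by linarith
  have hgpow : (Real.exp 7 * x^4)^k = Real.exp (7*(k:ℝ)) * x^(4*k) := by
    rw [mul_pow, ← Real.exp_nat_mul, pow_mul]
    ring_nf
  have hlogg : Real.log (Real.exp 7 * x^4) = 7 + 4 * Real.log x := by
    rw [Real.log_mul (Real.exp_ne_zero 7) (by positivity), Real.log_exp, Real.log_pow]
    push_cast; ring
  have hlogx : Real.log x ≤ x - 1 := Real.log_le_sub_one_of_pos hx0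
  have hxpow : x^(4*k) ≤ 2^(4*k) * (j:ℝ)^(4*k) := by
    calc x^(4*k) ≤ (2*(j:ℝ))^(4*k) := by
          apply pow_le_pow_left₀ (by linarith) (by rw [hx]; linarith)
      _ = 2^(4*k) * (j:ℝ)^(4*k) := by rw [mul_pow]
  have hx_le_pow : x ≤ x^(4*k) := by
    apply le_self_pow₀ hx1
    omega
  have hkR : (1:ℝ) ≤ (k:ℝ) := by exact_mod_cast hk
  have hexp_pos : (0:ℝ) < Real.exp (7*(k:ℝ)) := Real.exp_pos _
  have hjpow_pos : (0:ℝ) < (j:ℝ)^(4*k) := by positivity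
  have hxpow1 : (1:ℝ) ≤ x^(4*k) := one_le_pow₀ hx1
  calc (Real.exp 7 * x^4)^k + (k:ℝ) * Real.log (Real.exp 7 * x^4)
      = Real.exp (7*(k:ℝ)) * x^(4*k) + (k:ℝ) * (7 + 4 * Real.log x) := by
        rw [hgpow, hlogg]
    _ ≤ Real.exp (7*(k:ℝ)) * x^(4*k) + (k:ℝ) * (11 * x^(4*k)) := by
        have h1 : 7 + 4 * Real.log x ≤ 3 + 4*x := by linarith
        have h2 : 3 + 4*x ≤ 11 * x := by linarith
        have h3 : 11 * x ≤ 11 * x^(4*k) := by linarith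
        have : 7 + 4 * Real.log x ≤ 11 * x^(4*k) := by linarith
        nlinarith
    _ = (Real.exp (7*(k:ℝ)) + 11*(k:ℝ)) * x^(4*k) := by ring
    _ ≤ (Real.exp (7*(k:ℝ)) + 11*(k:ℝ)) * (2^(4*k) * (j:ℝ)^(4*k)) := by
        apply mul_le_mul_of_nonneg_left hxpow
        positivity
    _ = A * (j:ℝ)^(4*k) := by rw [hA]; push_cast; ring
    _ ≤ 2^j * Real.log 2 := hmain

theorem iterate_preimage_bound (k : ℕ) (hk : 0 < k) (a : ℕ → ℕ)
    (ha : a = Nat.totient ∨ a = sigmaFn) :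
    ∃ N : ℕ, ∀ n : ℕ, N ≤ n → ∀ m : ℕ, 0 < m → a^[k] m = n →
      (m : ℝ) ≤ n * Real.log (2 * n) := by
  rcases ha with ha | ha
  · -- totient case
    subst ha
    obtain ⟨j0, hj0⟩ := exists_j0 k hk
    refine ⟨max 2 (2^(2^(j0+1))), fun n hn m hm heq => ?_⟩
    have hn2 : 2 ≤ n := le_trans (le_max_left _ _) hn
    have hnm : n ≤ m := by rw [← heq]; exact totient_iterate_le k m
    have hm2 : 2 ≤ m := le_trans hn2 hnm
    have hmN : 2^(2^(j0+1)) ≤ m := le_trans (le_max_right _ _) (le_trans hn hnm)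
    set L := Nat.log 2 m with hL
    set j' := Nat.log 2 L with hj'
    have hLlb : 2^(j0+1) ≤ L := by
      rw [hL]
      calc 2^(j0+1) = Nat.log 2 (2^(2^(j0+1))) := (Nat.log_pow one_lt_two _).symm
        _ ≤ Nat.log 2 m := Nat.log_mono_right hmN
    have hL1 : 1 ≤ L := le_trans (Nat.one_le_two_pow) hLlb
    have hj0le : j0 ≤ j' := by
      rw [hj']
      calc j0 ≤ j0 + 1 := Nat.le_succ _
        _ = Nat.log 2 (2^(j0+1)) := (Nat.log_pow one_lt_two _).symm
        _ ≤ Nat.log 2 L := Nat.log_mono_right hLlb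
    -- real setup
    set g : ℝ := Gr m with hg
    have hg_eq : g = Real.exp 7 * ((j':ℝ)+1)^4 := by
      rw [hg]
      unfold Gr
      rw [← hL, ← hj']
      push_cast
      ring
    have hg1 : (1:ℝ) ≤ g := one_le_Gr m
    have hgpos : (0:ℝ) < g := lt_of_lt_of_le zero_lt_one hg1
    have hgk_pos : (0:ℝ) < g^k := by positivity
    have hmpos : (0:ℝ) < (m:ℝ) := by exact_mod_cast lt_of_lt_of_le zero_lt_two hm2
    have hnpos : (0:ℝ) < (n:ℝ) := by exact_mod_cast lt_of_lt_of_le zero_lt_two hn2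
    have hiter : (m:ℝ) ≤ (n:ℝ) * g^k := by
      have := iter_key k m (by omega)
      rwa [heq] at this
    -- log m lower bound
    have hlogm : (2:ℝ)^j' * Real.log 2 ≤ Real.log m := by
      have h1 : (2:ℕ)^(2^j') ≤ m := by
        calc (2:ℕ)^(2^j') ≤ 2^L := Nat.pow_le_pow_right (by norm_num)
              (by rw [hj']; exact Nat.pow_log_le_self 2 (by omega))
        _ ≤ m := Nat.pow_log_le_self 2 (by omega)
      have h2 : ((2:ℝ))^((2:ℕ)^j' : ℕ) ≤ (m:ℝ) := by exact_mod_cast h1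
      calc (2:ℝ)^j' * Real.log 2 = Real.log ((2:ℝ)^((2:ℕ)^j' : ℕ)) := by
            rw [Real.log_pow]
            push_cast
            ring
        _ ≤ Real.log m := Real.log_le_log (by positivity) h2
    -- main bound from exists_j0
    have hkey : g^k + (k:ℝ) * Real.log g ≤ Real.log m := by
      rw [hg_eq]
      refine le_trans (hj0 j' hj0le) ?_
      refine le_trans ?_ hlogm
      exact le_of_eq rfl
    -- conclude g^k ≤ log (2n)
    have hlog2n : g^k ≤ Real.log (2 * n) := by
      have hndiv : (m:ℝ) / g^k ≤ (n:ℝ) := by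
        rw [div_le_iff₀ hgk_pos]
        exact hiter
      have hstep : Real.log (2 * ((m:ℝ) / g^k)) ≤ Real.log (2 * n) := by
        apply Real.log_le_log (by positivity)
        linarith
      have hcomp : Real.log (2 * ((m:ℝ) / g^k))
          = Real.log 2 + Real.log m - (k:ℝ) * Real.log g := by
        rw [Real.log_mul (by norm_num) (by positivity),
          Real.log_div (by positivity) (by positivity), Real.log_pow]
        push_cast
        ring
      have hlog2pos : (0:ℝ) < Real.log 2 := Real.log_pos (by norm_num)
      calc g^k ≤ Real.log 2 + (g^k + (k:ℝ) * Real.log g) - (k:ℝ) * Real.log g := by ring_nf; linarith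
        _ ≤ Real.log 2 + Real.log m - (k:ℝ) * Real.log g := by linarith [hkey]
        _ = Real.log (2 * ((m:ℝ) / g^k)) := hcomp.symm
        _ ≤ Real.log (2 * n) := hstep
    calc (m:ℝ) ≤ (n:ℝ) * g^k := hiter
      _ ≤ (n:ℝ) * Real.log (2 * n) := mul_le_mul_of_nonneg_left hlog2n hnpos.le
  · -- sigma case
    subst ha
    refine ⟨2, fun n hn m hm heq => ?_⟩
    have hmn : m ≤ n := by rw [← heq]; exact sigma_le_iter k m hm
    have hn2 : (2:ℝ) ≤ (n:ℝ) := by exact_mod_cast hn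
    have h1 : (1:ℝ) ≤ Real.log (2 * n) := by
      rw [Real.le_log_iff_exp_le (by linarith)]
      calc Real.exp 1 ≤ 2.7182818286 := (Real.exp_one_lt_d9).le
        _ ≤ 2 * n := by linarith
    calc (m:ℝ) ≤ (n:ℝ) := by exact_mod_cast hmn
      _ = (n:ℝ) * 1 := (mul_one _).symm
      _ ≤ (n:ℝ) * Real.log (2 * n) := by
          apply mul_le_mul_of_nonneg_left h1 (by linarith)
end
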